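/- arXiv:2212.10871 — 6 statements merged into one kernel-verified Lean document; each statement's English description precedes it below -/
import Mathlib

section
/- Let (p_k)_{k≥0} be a critical offspring distribution with p_1 < 1 and probability generating function Φ. Then the function g(t) := t/Φ(t) is a continuous, strictly increasing bijection from [0,1] onto [0,1], and it is the inverse of the restriction to [0,1] of the tree-size generating function y; in particular y(t/Φ(t)) = t for all t ∈ [0,1] and y(z)/Φ(y(z)) = z for all z ∈ [0,1]. -/
/-!
Write `Φ` for the pgf. Criticality makes `Φ` `1`-Lipschitz on `[0,1]`, and, since
`∑ (k - 1) p_k = 0`, it also gives `Φ(u) - u = ∑ p_k (u^k - u + (k - 1) u (1 - u))`, a sum of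
nonnegative terms whose `k = 0` term is `p_0 (1 - u)^2`; moreover `p_0 > 0` because `p_1 < 1`.
For `s < t` in `[0,1]` these two bounds give `s Φ(t) ≤ s Φ(s) + s (t - s) < t Φ(s)`, so
`t / Φ(t)` is strictly increasing, and it maps `[0,1]` onto itself by the intermediate value
theorem. The fixed-point equation `y = z Φ(y)` says exactly that `y(z) / Φ(y(z)) = z`, and
injectivity of `t / Φ(t)` turns this into `y(t / Φ(t)) = t`.
-/

open Set

lemma hasSum_of_tsum_eq {ι : Type*} {f : ι → ℝ} {a : ℝ} (ha : a ≠ 0) (h : ∑' i, f i = a) :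
    HasSum f a := by
  have hf : Summable f := by
    by_contra hf
    exact ha (h ▸ tsum_eq_zero_of_not_summable hf)
  exact h ▸ hf.hasSum

lemma pow_sub_pow_le_mul_sub {s t : ℝ} (hs : 0 ≤ s) (hst : s ≤ t) (ht : t ≤ 1) (n : ℕ) :
    t ^ n - s ^ n ≤ n * (t - s) := by
  have hmax : max |t| |s| ^ (n - 1) ≤ 1 := by
    rw [abs_of_nonneg (hs.trans hst), abs_of_nonneg hs, max_eq_left hst]
    exact pow_le_one₀ (hs.trans hst) ht
  calc t ^ n - s ^ n ≤ |t ^ n - s ^ n| := le_abs_self _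
    _ ≤ |t - s| * n * max |t| |s| ^ (n - 1) := abs_pow_sub_pow_le t s n
    _ ≤ (t - s) * n * 1 := by
        rw [abs_of_nonneg (sub_nonneg.mpr hst)]
        gcongr
    _ = n * (t - s) := by ring

lemma pow_sub_self_add_mul_nonneg {u : ℝ} (hu : u ∈ Icc (0 : ℝ) 1) (k : ℕ) :
    0 ≤ u ^ k - u + (k - 1) * (u * (1 - u)) := by
  cases k with
  | zero => simp only [pow_zero, Nat.cast_zero]; nlinarith [sq_nonneg (1 - u)]
  | succ n =>
    have bernoulli : 1 + n * (u - 1) ≤ (1 + (u - 1)) ^ n :=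
      one_add_mul_le_pow (by linarith [hu.1]) n
    rw [add_sub_cancel] at bernoulli
    have hfactor : u ^ (n + 1) - u + ((n + 1 : ℕ) - 1) * (u * (1 - u)) =
        u * (u ^ n - (1 + n * (u - 1))) := by
      push_cast; ring
    rw [hfactor]
    exact mul_nonneg hu.1 (sub_nonneg.mpr bernoulli)

namespace GaltonWatson

noncomputable def pgf (p : ℕ → ℝ) (t : ℝ) : ℝ := ∑' k, p k * t ^ k

variable {p : ℕ → ℝ} {t : ℝ}

lemma summable_pgf (hp : ∀ k, 0 ≤ p k) (hs : Summable p) (ht : t ∈ Icc (0 : ℝ) 1) :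
    Summable fun k => p k * t ^ k :=
  hs.of_nonneg_of_le (fun k => mul_nonneg (hp k) (pow_nonneg ht.1 k))
    fun k => mul_le_of_le_one_right (hp k) (pow_le_one₀ ht.1 ht.2)

lemma continuousOn_pgf (hp : ∀ k, 0 ≤ p k) (hs : Summable p) :
    ContinuousOn (pgf p) (Icc 0 1) := by
  refine continuousOn_tsum (fun k => (continuous_const.mul (continuous_pow k)).continuousOn) hs ?_
  intro k t ht
  rw [Real.norm_of_nonneg (mul_nonneg (hp k) (pow_nonneg ht.1 k))]
  exact mul_le_of_le_one_right (hp k) (pow_le_one₀ ht.1 ht.2)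

lemma pgf_one (hsum : HasSum p 1) : pgf p 1 = 1 := by
  simp [pgf, hsum.tsum_eq]

lemma pgf_mem_Icc (hp : ∀ k, 0 ≤ p k) (hsum : HasSum p 1) (ht : t ∈ Icc (0 : ℝ) 1) :
    pgf p t ∈ Icc (0 : ℝ) 1 := by
  refine ⟨tsum_nonneg fun k => mul_nonneg (hp k) (pow_nonneg ht.1 k), ?_⟩
  rw [← hsum.tsum_eq]
  exact (summable_pgf hp hsum.summable ht).tsum_le_tsum
    (fun k => mul_le_of_le_one_right (hp k) (pow_le_one₀ ht.1 ht.2)) hsum.summable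

lemma pgf_pos (hp : ∀ k, 0 ≤ p k) (hs : Summable p) (hp0 : 0 < p 0) (ht : t ∈ Icc (0 : ℝ) 1) :
    0 < pgf p t := by
  refine hp0.trans_le ?_
  simpa [pgf] using
    (summable_pgf hp hs ht).le_tsum 0 fun k _ => mul_nonneg (hp k) (pow_nonneg ht.1 k)

lemma pgf_sub_pgf_le {m s : ℝ} (hp : ∀ k, 0 ≤ p k) (hs : Summable p)
    (hmean : HasSum (fun k : ℕ => (k : ℝ) * p k) m) (hs0 : 0 ≤ s) (hst : s ≤ t) (ht1 : t ≤ 1) :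
    pgf p t - pgf p s ≤ m * (t - s) := by
  have hsum_s := summable_pgf hp hs ⟨hs0, hst.trans ht1⟩
  have hsum_t := summable_pgf hp hs ⟨hs0.trans hst, ht1⟩
  rw [pgf, pgf, ← hsum_t.tsum_sub hsum_s, ← (hmean.mul_right (t - s)).tsum_eq]
  refine (hsum_t.sub hsum_s).tsum_le_tsum (fun k => ?_) (hmean.mul_right _).summable
  calc p k * t ^ k - p k * s ^ k = p k * (t ^ k - s ^ k) := by ring
    _ ≤ p k * (k * (t - s)) :=
        mul_le_mul_of_nonneg_left (pow_sub_pow_le_mul_sub hs0 hst ht1 k) (hp k)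
    _ = k * p k * (t - s) := by ring

lemma continuousOn_div_pgf (hp : ∀ k, 0 ≤ p k) (hs : Summable p) (hp0 : 0 < p 0) :
    ContinuousOn (fun t => t / pgf p t) (Icc 0 1) :=
  continuousOn_id.div (continuousOn_pgf hp hs) fun _ ht => (pgf_pos hp hs hp0 ht).ne'

section Critical

variable (hp : ∀ k, 0 ≤ p k) (hsum : HasSum p 1) (hmean : HasSum (fun k : ℕ => (k : ℝ) * p k) 1)
include hp hsum hmean

lemma apply_zero_pos (hp1 : p 1 < 1) : 0 < p 0 := by
  refine (hp 0).lt_of_ne fun hp0 => hp1.ne ?_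
  have hzero : HasSum (fun k : ℕ => ((k : ℝ) - 1) * p k) 0 := by
    simpa [sub_mul] using hmean.sub hsum
  have hnonneg : ∀ k : ℕ, 0 ≤ ((k : ℝ) - 1) * p k := by
    rintro (_ | k)
    · simp [← hp0]
    · exact mul_nonneg (by simp) (hp _)
  have hterm := congrFun ((hasSum_zero_iff_of_nonneg hnonneg).mp hzero)
  refine (hasSum_single 1 fun k hk => ?_).unique hsum
  rcases k with _ | _ | k
  · exact hp0.symm
  · exact absurd rfl hk
  · refine (mul_eq_zero.mp (hterm (k + 2))).resolve_left ?_
    push_cast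
    linarith [k.cast_nonneg (α := ℝ)]

lemma self_add_mul_sq_le_pgf (hu : t ∈ Icc (0 : ℝ) 1) : t + p 0 * (1 - t) ^ 2 ≤ pgf p t := by
  have hdiff : HasSum (fun k => p k * (t ^ k - t + (k - 1) * (t * (1 - t)))) (pgf p t - t) := by
    have h := ((summable_pgf hp hsum.summable hu).hasSum.sub (hsum.mul_right t)).add
      ((hmean.sub hsum).mul_right (t * (1 - t)))
    rw [show pgf p t - t = ∑' k, p k * t ^ k - 1 * t + (1 - 1) * (t * (1 - t)) by
      unfold pgf; ring]
    exact h.congr_fun fun k => by ring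
  have := le_hasSum hdiff 0 fun k _ => mul_nonneg (hp k) (pow_sub_self_add_mul_nonneg hu k)
  simp only [pow_zero, Nat.cast_zero] at this
  linarith

lemma strictMonoOn_div_pgf (hp0 : 0 < p 0) : StrictMonoOn (fun t => t / pgf p t) (Icc 0 1) := by
  intro s hs t ht hst
  have hlip := pgf_sub_pgf_le hp hsum.summable hmean hs.1 hst.le ht.2
  have hlow := self_add_mul_sq_le_pgf hp hsum hmean hs
  have hgap : 0 < (t - s) * (p 0 * (1 - s) ^ 2) := by
    have : 0 < 1 - s := sub_pos.mpr (hst.trans_le ht.2)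
    have : 0 < t - s := sub_pos.mpr hst
    positivity
  show s / pgf p s < t / pgf p t
  rw [div_lt_div_iff₀ (pgf_pos hp hsum.summable hp0 hs) (pgf_pos hp hsum.summable hp0 ht)]
  calc s * pgf p t ≤ s * (pgf p s + (t - s)) := by gcongr; exacts [hs.1, by linarith]
    _ < s * pgf p s + (t - s) * (s + p 0 * (1 - s) ^ 2) := by linarith
    _ ≤ t * pgf p s := by nlinarith

lemma mapsTo_div_pgf : MapsTo (fun t => t / pgf p t) (Icc 0 1) (Icc 0 1) := by
  intro t ht
  have hle : t ≤ pgf p t := by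
    nlinarith [self_add_mul_sq_le_pgf hp hsum hmean ht, hp 0, sq_nonneg (1 - t)]
  exact ⟨div_nonneg ht.1 (ht.1.trans hle), div_le_one_of_le₀ hle (ht.1.trans hle)⟩

lemma bijOn_div_pgf (hp0 : 0 < p 0) : BijOn (fun t => t / pgf p t) (Icc 0 1) (Icc 0 1) := by
  refine ⟨mapsTo_div_pgf hp hsum hmean, (strictMonoOn_div_pgf hp hsum hmean hp0).injOn, ?_⟩
  have hivt := intermediate_value_Icc zero_le_one (continuousOn_div_pgf hp hsum.summable hp0)
  rwa [pgf_one hsum, zero_div, div_one] at hivt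

end Critical

end GaltonWatson

open GaltonWatson in
theorem stmt0_general
    (p : ℕ → ℝ) (hp : ∀ k, 0 ≤ p k)
    (hpsum : ∑' k, p k = 1)
    (hcrit : ∑' k : ℕ, (k : ℝ) * p k = 1)
    (hp1 : p 1 < 1)
    (q : ℕ → ℝ) (hqnn : ∀ n, 0 ≤ q n)
    (hqsum : ∑' n, q n = 1)
    (hfix : ∀ z ∈ Set.Icc (0:ℝ) 1,
      (∑' n, q n * z ^ n) = z * ∑' k, p k * (∑' n, q n * z ^ n) ^ k) :
    ContinuousOn (fun t : ℝ => t / ∑' k, p k * t ^ k) (Set.Icc 0 1) ∧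
    StrictMonoOn (fun t : ℝ => t / ∑' k, p k * t ^ k) (Set.Icc 0 1) ∧
    Set.BijOn (fun t : ℝ => t / ∑' k, p k * t ^ k) (Set.Icc 0 1) (Set.Icc 0 1) ∧
    (∀ t ∈ Set.Icc (0:ℝ) 1,
      (∑' n, q n * (t / ∑' k, p k * t ^ k) ^ n) = t) ∧
    (∀ z ∈ Set.Icc (0:ℝ) 1,
      (∑' n, q n * z ^ n) / (∑' k, p k * (∑' n, q n * z ^ n) ^ k) = z) := by
  have hsum : HasSum p 1 := hasSum_of_tsum_eq one_ne_zero hpsum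
  have hmean : HasSum (fun k : ℕ => (k : ℝ) * p k) 1 := hasSum_of_tsum_eq one_ne_zero hcrit
  have hq : HasSum q 1 := hasSum_of_tsum_eq one_ne_zero hqsum
  have hp0 := apply_zero_pos hp hsum hmean hp1
  have hy_mem : ∀ z ∈ Icc (0 : ℝ) 1, pgf q z ∈ Icc (0 : ℝ) 1 := fun _ => pgf_mem_Icc hqnn hq
  have hy_div : ∀ z ∈ Icc (0 : ℝ) 1, pgf q z / pgf p (pgf q z) = z := fun z hz =>
    div_eq_of_eq_mul (pgf_pos hp hsum.summable hp0 (hy_mem z hz)).ne' (hfix z hz)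
  have hmono := strictMonoOn_div_pgf hp hsum hmean hp0
  have hbij := bijOn_div_pgf hp hsum hmean hp0
  refine ⟨continuousOn_div_pgf hp hsum.summable hp0, hmono, hbij, fun t ht => ?_, hy_div⟩
  exact hmono.injOn (hy_mem _ (hbij.mapsTo ht)) ht (hy_div _ (hbij.mapsTo ht))

/-- For a critical offspring distribution `p` with `p 1 < 1` and pgf
`Φ(t) = ∑' k, p k * t^k`, and tree-size generating function `y(z) = ∑' n, q n * z^n`
(characterized by `y(z) = z·Φ(y(z))` on `[0,1]`), the map `g(t) = t / Φ(t)` is a continuous,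
strictly increasing bijection of `[0,1]` onto itself, and it is the inverse of the restriction
of `y` to `[0,1]`. -/
theorem stmt0
    (p : ℕ → ℝ) (hp : ∀ k, 0 ≤ p k)
    (hpsum : ∑' k, p k = 1)
    (hcrit : ∑' k : ℕ, (k : ℝ) * p k = 1)
    (hp1 : p 1 < 1)
    (q : ℕ → ℝ) (hq0 : q 0 = 0) (hqnn : ∀ n, 0 ≤ q n)
    (hqsum : ∑' n, q n = 1)
    (hfix : ∀ z ∈ Set.Icc (0:ℝ) 1,
      (∑' n, q n * z ^ n) = z * ∑' k, p k * (∑' n, q n * z ^ n) ^ k) :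
    ContinuousOn (fun t : ℝ => t / ∑' k, p k * t ^ k) (Set.Icc 0 1) ∧
    StrictMonoOn (fun t : ℝ => t / ∑' k, p k * t ^ k) (Set.Icc 0 1) ∧
    Set.BijOn (fun t : ℝ => t / ∑' k, p k * t ^ k) (Set.Icc 0 1) (Set.Icc 0 1) ∧
    (∀ t ∈ Set.Icc (0:ℝ) 1,
      (∑' n, q n * (t / ∑' k, p k * t ^ k) ^ n) = t) ∧
    (∀ z ∈ Set.Icc (0:ℝ) 1,
      (∑' n, q n * z ^ n) / (∑' k, p k * (∑' n, q n * z ^ n) ^ k) = z) :=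
  stmt0_general p hp hpsum hcrit hp1 q hqnn hqsum hfix
end

section
/- Let (p_k^{(1)}) and (p_k^{(2)}) be critical offspring distributions, each with p_1 < 1, with pgfs Φ_1, Φ_2 and tree-size generating functions y_1, y_2. Then Φ_1(t) ≤ Φ_2(t) for all t ∈ (0,1) if and only if y_1(t) ≤ y_2(t) for all t ∈ (0,1). -/
/-!
Fix `t ∈ (0,1)`. The function `g(u) = t Φ₁(u) - u` is convex on `[0,1]`, vanishes at `y₁(t)` and
is negative at `1`, so it is positive on `[0, y₁(t))` and nonpositive on `[y₁(t), 1]`.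
If `Φ₁ ≤ Φ₂`, then `g(y₂(t)) ≤ t Φ₂(y₂(t)) - y₂(t) = 0`, which forces `y₁(t) ≤ y₂(t)`.
Conversely, if `y₁ ≤ y₂`, write `s ∈ (0,1)` as `s = y₂(t)` (intermediate value theorem); then
`y₁(t) ≤ s`, so `g(s) ≤ 0`, i.e. `t Φ₁(s) ≤ s = t Φ₂(s)`.
-/

open Set

noncomputable def genFun (a : ℕ → ℝ) (t : ℝ) : ℝ := ∑' n, a n * t ^ n

theorem summable_of_tsum_eq_one {ι : Type*} {a : ι → ℝ} (h : ∑' i, a i = 1) : Summable a := by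
  by_contra hs
  simp [tsum_eq_zero_of_not_summable hs] at h

theorem convexOn_tsum {ι : Type*} {f : ι → ℝ → ℝ} {s : Set ℝ} (hs : Convex ℝ s)
    (hf : ∀ i, ConvexOn ℝ s (f i)) (hsum : ∀ x ∈ s, Summable fun i => f i x) :
    ConvexOn ℝ s fun x => ∑' i, f i x := by
  refine ⟨hs, fun x hx y hy a b ha hb hab => ?_⟩
  have hx' := (hsum x hx).const_smul a
  have hy' := (hsum y hy).const_smul b
  calc ∑' i, f i (a • x + b • y)
      ≤ ∑' i, (a • f i x + b • f i y) :=
        (hsum _ (hs hx hy ha hb hab)).tsum_le_tsum (fun i => (hf i).2 hx hy ha hb hab)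
          (hx'.add hy')
    _ = a • ∑' i, f i x + b • ∑' i, f i y := by
        rw [hx'.tsum_add hy', (hsum x hx).tsum_const_smul, (hsum y hy).tsum_const_smul]

section ConvexFixedPoint

variable {Φ : ℝ → ℝ} {t a : ℝ}

theorem convexOn_mul_sub_id (hΦ : ConvexOn ℝ (Icc 0 1) Φ) (ht : 0 ≤ t) :
    ConvexOn ℝ (Icc 0 1) fun u => t * Φ u - u :=
  (hΦ.smul ht).sub (concaveOn_id (convex_Icc 0 1))

theorem fixedPoint_le_of_mul_le (hΦ : ConvexOn ℝ (Icc 0 1) Φ) (hΦ1 : Φ 1 = 1) (ht0 : 0 ≤ t)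
    (ht1 : t < 1) (ha : a ∈ Icc 0 1) (hfa : a = t * Φ a) {b : ℝ} (hb : b ∈ Icc 0 1)
    (hfb : t * Φ b ≤ b) : a ≤ b := by
  by_contra! hba
  have ha1 : a < 1 := ha.2.lt_of_ne (by rintro rfl; rw [hΦ1] at hfa; linarith)
  have hseg : a ∈ openSegment ℝ b 1 := by
    rw [openSegment_eq_Ioo (hba.trans ha1)]
    exact ⟨hba, ha1⟩
  have hg := (convexOn_mul_sub_id hΦ ht0).le_right_of_left_le hb (right_mem_Icc.2 zero_le_one)
    hseg (by linarith)
  simp only [hΦ1] at hg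
  linarith

theorem mul_le_of_fixedPoint_le (hΦ : ConvexOn ℝ (Icc 0 1) Φ) (hΦ1 : Φ 1 = 1) (ht0 : 0 ≤ t)
    (ht1 : t ≤ 1) (ha : 0 ≤ a) (hfa : a = t * Φ a) {s : ℝ} (has : a ≤ s) (hs : s ≤ 1) :
    t * Φ s ≤ s := by
  have hseg : s ∈ segment ℝ a 1 := by
    rw [segment_eq_Icc (has.trans hs)]
    exact ⟨has, hs⟩
  have hg := (convexOn_mul_sub_id hΦ ht0).le_on_segment ⟨ha, has.trans hs⟩
    (right_mem_Icc.2 zero_le_one) hseg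
  rw [← hfa, hΦ1, sub_self, max_eq_left (by linarith)] at hg
  linarith

end ConvexFixedPoint

section GenFun

variable {a : ℕ → ℝ} {t : ℝ}

theorem summable_mul_pow (ha : ∀ n, 0 ≤ a n) (hs : Summable a) (ht : t ∈ Icc 0 1) :
    Summable fun n => a n * t ^ n :=
  hs.of_nonneg_of_le (fun n => mul_nonneg (ha n) (pow_nonneg ht.1 n))
    (fun n => mul_le_of_le_one_right (ha n) (pow_le_one₀ ht.1 ht.2))

theorem genFun_nonneg (ha : ∀ n, 0 ≤ a n) (ht : 0 ≤ t) : 0 ≤ genFun a t :=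
  tsum_nonneg fun n => mul_nonneg (ha n) (pow_nonneg ht n)

theorem genFun_le_tsum (ha : ∀ n, 0 ≤ a n) (hs : Summable a) (ht : t ∈ Icc 0 1) :
    genFun a t ≤ ∑' n, a n :=
  (summable_mul_pow ha hs ht).tsum_le_tsum
    (fun n => mul_le_of_le_one_right (ha n) (pow_le_one₀ ht.1 ht.2)) hs

theorem genFun_pos (ha : ∀ n, 0 ≤ a n) (hsum : ∑' n, a n = 1) (ht : t ∈ Ioc 0 1) :
    0 < genFun a t := by
  obtain ⟨n, hn⟩ : ∃ n, a n ≠ 0 := by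
    by_contra! h
    simp [h] at hsum
  exact (summable_mul_pow ha (summable_of_tsum_eq_one hsum) (Ioc_subset_Icc_self ht)).tsum_pos
    (fun n => mul_nonneg (ha n) (pow_nonneg ht.1.le n)) n
    (mul_pos ((ha n).lt_of_ne' hn) (pow_pos ht.1 n))

theorem genFun_zero (h0 : a 0 = 0) : genFun a 0 = 0 := by
  rw [genFun, tsum_eq_single 0 fun n hn => by simp [zero_pow hn]]
  simp [h0]

theorem genFun_one : genFun a 1 = ∑' n, a n := by
  simp [genFun]

theorem continuousOn_genFun (ha : ∀ n, 0 ≤ a n) (hs : Summable a) :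
    ContinuousOn (genFun a) (Icc 0 1) :=
  continuousOn_tsum (fun n => (continuous_const.mul (continuous_pow n)).continuousOn) hs
    fun n t ht => by
      rw [Real.norm_of_nonneg (mul_nonneg (ha n) (pow_nonneg ht.1 n))]
      exact mul_le_of_le_one_right (ha n) (pow_le_one₀ ht.1 ht.2)

theorem convexOn_genFun (ha : ∀ n, 0 ≤ a n) (hs : Summable a) :
    ConvexOn ℝ (Icc 0 1) (genFun a) :=
  convexOn_tsum (convex_Icc 0 1)
    (fun n => ((convexOn_pow n).subset Icc_subset_Ici_self (convex_Icc 0 1)).smul (ha n))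
    fun _ ht => summable_mul_pow ha hs ht

theorem surjOn_genFun (ha : ∀ n, 0 ≤ a n) (h0 : a 0 = 0) (hsum : ∑' n, a n = 1) :
    SurjOn (genFun a) (Ioo 0 1) (Ioo 0 1) := by
  have := intermediate_value_Ioo zero_le_one
    (continuousOn_genFun ha (summable_of_tsum_eq_one hsum))
  rwa [genFun_zero h0, genFun_one, hsum] at this

end GenFun

theorem treeSize_le_of_pgf_le {p₁ p₂ q₁ q₂ : ℕ → ℝ} (hp₁ : ∀ k, 0 ≤ p₁ k)
    (hpsum₁ : ∑' k, p₁ k = 1) (hq₁nn : ∀ n, 0 ≤ q₁ n) (hq₂nn : ∀ n, 0 ≤ q₂ n)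
    (hq₁sum : ∑' n, q₁ n = 1) (hq₂sum : ∑' n, q₂ n = 1)
    (hfix₁ : ∀ z ∈ Icc (0:ℝ) 1, genFun q₁ z = z * genFun p₁ (genFun q₁ z))
    (hfix₂ : ∀ z ∈ Icc (0:ℝ) 1, genFun q₂ z = z * genFun p₂ (genFun q₂ z))
    (hΦ : ∀ t ∈ Ioo (0:ℝ) 1, genFun p₁ t ≤ genFun p₂ t) {t : ℝ} (ht : t ∈ Ioo 0 1) :
    genFun q₁ t ≤ genFun q₂ t := by
  have htI : t ∈ Icc (0:ℝ) 1 := Ioo_subset_Icc_self ht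
  have hy₁ : genFun q₁ t ∈ Icc 0 1 := ⟨genFun_nonneg hq₁nn ht.1.le,
    hq₁sum ▸ genFun_le_tsum hq₁nn (summable_of_tsum_eq_one hq₁sum) htI⟩
  have hy₂ : genFun q₂ t ∈ Icc 0 1 := ⟨genFun_nonneg hq₂nn ht.1.le,
    hq₂sum ▸ genFun_le_tsum hq₂nn (summable_of_tsum_eq_one hq₂sum) htI⟩
  rcases hy₂.2.lt_or_eq with hy₂1 | hy₂1
  · have hy₂0 : 0 < genFun q₂ t := genFun_pos hq₂nn hq₂sum ⟨ht.1, ht.2.le⟩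
    have hsub : t * genFun p₁ (genFun q₂ t) ≤ genFun q₂ t :=
      calc t * genFun p₁ (genFun q₂ t) ≤ t * genFun p₂ (genFun q₂ t) :=
            mul_le_mul_of_nonneg_left (hΦ _ ⟨hy₂0, hy₂1⟩) ht.1.le
        _ = genFun q₂ t := (hfix₂ t htI).symm
    exact fixedPoint_le_of_mul_le (convexOn_genFun hp₁ (summable_of_tsum_eq_one hpsum₁))
      (genFun_one.trans hpsum₁) ht.1.le ht.2 hy₁ (hfix₁ t htI) hy₂ hsub
  · exact hy₂1 ▸ hy₁.2

theorem pgf_le_of_treeSize_le {p₁ p₂ q₁ q₂ : ℕ → ℝ} (hp₁ : ∀ k, 0 ≤ p₁ k)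
    (hpsum₁ : ∑' k, p₁ k = 1) (hq₁nn : ∀ n, 0 ≤ q₁ n) (hq₂nn : ∀ n, 0 ≤ q₂ n)
    (hq₂0 : q₂ 0 = 0) (hq₂sum : ∑' n, q₂ n = 1)
    (hfix₁ : ∀ z ∈ Icc (0:ℝ) 1, genFun q₁ z = z * genFun p₁ (genFun q₁ z))
    (hfix₂ : ∀ z ∈ Icc (0:ℝ) 1, genFun q₂ z = z * genFun p₂ (genFun q₂ z))
    (hy : ∀ t ∈ Ioo (0:ℝ) 1, genFun q₁ t ≤ genFun q₂ t) {s : ℝ} (hs : s ∈ Ioo 0 1) :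
    genFun p₁ s ≤ genFun p₂ s := by
  obtain ⟨t, ht, rfl⟩ := surjOn_genFun hq₂nn hq₂0 hq₂sum hs
  have htI : t ∈ Icc (0:ℝ) 1 := Ioo_subset_Icc_self ht
  have hsub : t * genFun p₁ (genFun q₂ t) ≤ genFun q₂ t :=
    mul_le_of_fixedPoint_le (convexOn_genFun hp₁ (summable_of_tsum_eq_one hpsum₁))
      (genFun_one.trans hpsum₁) ht.1.le ht.2.le (genFun_nonneg hq₁nn ht.1.le) (hfix₁ t htI)
      (hy t ht) hs.2.le
  exact le_of_mul_le_mul_left (hsub.trans_eq (hfix₂ t htI)) ht.1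

theorem stmt1_general
    (p₁ p₂ : ℕ → ℝ) (hp₁ : ∀ k, 0 ≤ p₁ k)
    (hpsum₁ : ∑' k, p₁ k = 1)
    (q₁ q₂ : ℕ → ℝ)
    (hq₂0 : q₂ 0 = 0)
    (hq₁nn : ∀ n, 0 ≤ q₁ n) (hq₂nn : ∀ n, 0 ≤ q₂ n)
    (hq₁sum : ∑' n, q₁ n = 1) (hq₂sum : ∑' n, q₂ n = 1)
    (hfix₁ : ∀ z ∈ Set.Icc (0:ℝ) 1,
      (∑' n, q₁ n * z ^ n) = z * ∑' k, p₁ k * (∑' n, q₁ n * z ^ n) ^ k)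
    (hfix₂ : ∀ z ∈ Set.Icc (0:ℝ) 1,
      (∑' n, q₂ n * z ^ n) = z * ∑' k, p₂ k * (∑' n, q₂ n * z ^ n) ^ k) :
    (∀ t ∈ Set.Ioo (0:ℝ) 1, (∑' k, p₁ k * t ^ k) ≤ ∑' k, p₂ k * t ^ k) ↔
    (∀ t ∈ Set.Ioo (0:ℝ) 1, (∑' n, q₁ n * t ^ n) ≤ ∑' n, q₂ n * t ^ n) :=
  ⟨fun hΦ _ ht => treeSize_le_of_pgf_le hp₁ hpsum₁ hq₁nn hq₂nn hq₁sum hq₂sum hfix₁ hfix₂ hΦ ht,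
    fun hy _ hs => pgf_le_of_treeSize_le hp₁ hpsum₁ hq₁nn hq₂nn hq₂0 hq₂sum hfix₁ hfix₂ hy hs⟩

/-- For two critical offspring distributions (each with `p 1 < 1`), with pgfs
`Φᵢ` and tree-size generating functions `yᵢ`, one has `Φ₁ ≤ Φ₂` on `(0,1)` iff `y₁ ≤ y₂`
on `(0,1)`. -/
theorem stmt1
    (p₁ p₂ : ℕ → ℝ) (hp₁ : ∀ k, 0 ≤ p₁ k) (hp₂ : ∀ k, 0 ≤ p₂ k)
    (hpsum₁ : ∑' k, p₁ k = 1) (hpsum₂ : ∑' k, p₂ k = 1)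
    (hcrit₁ : ∑' k : ℕ, (k : ℝ) * p₁ k = 1) (hcrit₂ : ∑' k : ℕ, (k : ℝ) * p₂ k = 1)
    (hp₁1 : p₁ 1 < 1) (hp₂1 : p₂ 1 < 1)
    (q₁ q₂ : ℕ → ℝ)
    (hq₁0 : q₁ 0 = 0) (hq₂0 : q₂ 0 = 0)
    (hq₁nn : ∀ n, 0 ≤ q₁ n) (hq₂nn : ∀ n, 0 ≤ q₂ n)
    (hq₁sum : ∑' n, q₁ n = 1) (hq₂sum : ∑' n, q₂ n = 1)
    (hfix₁ : ∀ z ∈ Set.Icc (0:ℝ) 1,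
      (∑' n, q₁ n * z ^ n) = z * ∑' k, p₁ k * (∑' n, q₁ n * z ^ n) ^ k)
    (hfix₂ : ∀ z ∈ Set.Icc (0:ℝ) 1,
      (∑' n, q₂ n * z ^ n) = z * ∑' k, p₂ k * (∑' n, q₂ n * z ^ n) ^ k) :
    (∀ t ∈ Set.Ioo (0:ℝ) 1, (∑' k, p₁ k * t ^ k) ≤ ∑' k, p₂ k * t ^ k) ↔
    (∀ t ∈ Set.Ioo (0:ℝ) 1, (∑' n, q₁ n * t ^ n) ≤ ∑' n, q₂ n * t ^ n) :=
  stmt1_general p₁ p₂ hp₁ hpsum₁ q₁ q₂ hq₂0 hq₁nn hq₂nn hq₁sum hq₂sum hfix₁ hfix₂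
end

section
/- For every real t ∈ (0,1) and every integer m ≥ 2, the following chain of strict inequalities holds: ((m−1+t)/m)^m < e^{t−1} < (1+t²)/2 < 1/(2−t) < (2+t³)/3. -/
/-!
The first inequality is `1 + x < eˣ` at `x = (t - 1)/m`, raised to the `m`-th power. For the
second, with `s = 1 - t`, the cubic Taylor bound `eˢ ≥ 1 + s + s²/2 + s³/6` gives `eˢ (1 + t²) ≥ 2 + s³/3 + s⁴/6 + s⁵/6 > 2`. The last two
clear denominators to `t (1 - t)² > 0` and `(1 - t)³ (1 + t) > 0`.
-/

namespace Real

theorem one_add_div_pow_lt_exp {n : ℕ} {x : ℝ} (hn : n ≠ 0) (hx : x ≠ 0) (hxn : -n ≤ x) :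
    (1 + x / n) ^ n < exp x := by
  have hn0 : (0 : ℝ) < n := by positivity
  have hbase : 0 ≤ 1 + x / n := by
    rw [← neg_le_iff_add_nonneg', le_div_iff₀ hn0]
    linarith
  calc (1 + x / n) ^ n < exp (x / n) ^ n := by
        refine pow_lt_pow_left₀ ?_ hbase hn
        simpa [add_comm] using add_one_lt_exp (div_ne_zero hx hn0.ne')
    _ = exp x := by rw [← exp_nat_mul, mul_div_cancel₀ _ hn0.ne']

theorem cubic_taylor_le_exp {x : ℝ} (hx : 0 ≤ x) :
    1 + x + x ^ 2 / 2 + x ^ 3 / 6 ≤ exp x := by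
  have h := sum_le_exp_of_nonneg hx 4
  simp only [Finset.sum_range_succ, Finset.sum_range_zero, Nat.factorial] at h
  norm_num at h
  linarith

theorem exp_sub_one_lt_one_add_sq_div_two {t : ℝ} (ht : t < 1) :
    exp (t - 1) < (1 + t ^ 2) / 2 := by
  set s := 1 - t with hs_def
  have hs0 : 0 < s := by linarith
  have htaylor : 2 < (1 + s + s ^ 2 / 2 + s ^ 3 / 6) * (1 + t ^ 2) := by
    have hexpand : (1 + s + s ^ 2 / 2 + s ^ 3 / 6) * (1 + t ^ 2)
        = 2 + s ^ 3 / 3 + s ^ 4 / 6 + s ^ 5 / 6 := by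
      rw [show t = 1 - s by linarith]
      ring
    have : 0 < s ^ 3 / 3 + s ^ 4 / 6 + s ^ 5 / 6 := by positivity
    linarith
  have hprod : 2 < exp s * (1 + t ^ 2) :=
    htaylor.trans_le (mul_le_mul_of_nonneg_right (cubic_taylor_le_exp hs0.le) (by positivity))
  rw [show t - 1 = -s by ring, exp_neg, inv_eq_one_div, div_lt_div_iff₀ (exp_pos s) two_pos]
  linarith

end Real

theorem one_add_sq_div_two_lt_one_div_two_sub {t : ℝ} (ht0 : 0 < t) (ht1 : t < 1) :
    (1 + t ^ 2) / 2 < 1 / (2 - t) := by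
  rw [div_lt_div_iff₀ two_pos (by linarith)]
  have : 0 < t * (1 - t) ^ 2 := by
    have : 0 < 1 - t := by linarith
    positivity
  linear_combination this

theorem one_div_two_sub_lt_two_add_cube_div_three {t : ℝ} (ht0 : -1 < t) (ht1 : t < 1) :
    1 / (2 - t) < (2 + t ^ 3) / 3 := by
  rw [div_lt_div_iff₀ (by linarith) three_pos]
  have : 0 < (1 - t) ^ 3 * (1 + t) := by
    have : 0 < 1 - t := by linarith
    have : 0 < 1 + t := by linarith
    positivity
  linear_combination this

/-- part of Lemma 6.12. For `t ∈ (0,1)` and integers `m ≥ 2`: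
`((m−1+t)/m)^m < e^{t−1} < (1+t²)/2 < 1/(2−t) < (2+t³)/3`. -/
theorem stmt11 (t : ℝ) (ht0 : 0 < t) (ht1 : t < 1) (m : ℕ) (hm : 2 ≤ m) :
    (((m : ℝ) - 1 + t) / m) ^ m < Real.exp (t - 1) ∧
    Real.exp (t - 1) < (1 + t ^ 2) / 2 ∧
    (1 + t ^ 2) / 2 < 1 / (2 - t) ∧
    1 / (2 - t) < (2 + t ^ 3) / 3 := by
  have hm0 : m ≠ 0 := by omega
  have hbase : ((m : ℝ) - 1 + t) / m = 1 + (t - 1) / m := by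
    field_simp
    ring
  refine ⟨?_, Real.exp_sub_one_lt_one_add_sq_div_two ht1,
    one_add_sq_div_two_lt_one_div_two_sub ht0 ht1,
    one_div_two_sub_lt_two_add_cube_div_three (by linarith) ht1⟩
  rw [hbase]
  refine Real.one_add_div_pow_lt_exp hm0 (by linarith) ?_
  have : (1 : ℝ) ≤ m := by exact_mod_cast Nat.one_le_iff_ne_zero.mpr hm0
  linarith
end

section
/- Let ξ be a nonnegative real-valued random variable with Laplace transform f(t) = E e^{−tξ} and moments m_j = E ξ^j ∈ [0,∞] (with m_0 = 1). Let r be a positive integer and suppose m_{r−1} < ∞. Define, for t > 0, g(t) := (−1)^r t^{−r} r! [ f(t) − ∑_{j=0}^{r−1} (−1)^j m_j t^j / j! ]. Then g(t) ≥ 0 for all t > 0, g is nonincreasing on (0,∞), and g(t) → m_r in [0,∞] as t ↓ 0. -/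
/-!
Write `R_r(y) = (-1)^r (e^{-y} - ∑_{j<r} (-y)^j / j!)`. Then `R_0(y) = e^{-y}`, `R_{r+1}' = R_r`
and `R_{r+1}(0) = 0`, so `R_r` is the `r`-fold integral of `e^{-y}` from `0`, and
`g(t) = E[r! R_r(tξ) / t^r]`. Integrating nonnegative derivatives gives `R_r ≥ 0` and
`y R_r(y) ≤ (r+1) R_{r+1}(y)`, which is the sign of the derivative of `t ↦ R_r(tx) / t^r`;
hence the integrand is nonnegative and nonincreasing in `t`. Since
`y^r / r! - R_r(y) = R_{r+1}(y) ∈ [0, y^{r+1} / (r+1)!]`, the integrand increases to `ξ^r` as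
`t ↓ 0`, and monotone convergence gives `g(t) → E ξ^r`.
-/

open MeasureTheory Filter Topology Set

lemma nonneg_of_hasDerivAt_nonneg {f f' : ℝ → ℝ} (hf : ∀ y, HasDerivAt f (f' y) y)
    (h0 : 0 ≤ f 0) (hf' : ∀ y, 0 ≤ y → 0 ≤ f' y) {y : ℝ} (hy : 0 ≤ y) : 0 ≤ f y :=
  h0.trans <| monotoneOn_of_hasDerivWithinAt_nonneg (convex_Ici 0)
    (fun x _ => (hf x).continuousAt.continuousWithinAt) (fun x _ => (hf x).hasDerivWithinAt)
    (fun x hx => hf' x (interior_subset hx)) self_mem_Ici hy hy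

lemma tendsto_lintegral_nhdsGT_of_antitoneOn {α : Type*} [MeasurableSpace α] {μ : Measure α}
    {F : ℝ → α → ENNReal} {G : α → ENNReal} {a : ℝ}
    (hF : ∀ t, a < t → AEMeasurable (F t) μ)
    (h_anti : ∀ᵐ x ∂μ, AntitoneOn (fun t => F t x) (Ioi a))
    (h_lim : ∀ᵐ x ∂μ, Tendsto (fun t => F t x) (𝓝[>] a) (𝓝 (G x))) :
    Tendsto (fun t => ∫⁻ x, F t x ∂μ) (𝓝[>] a) (𝓝 (∫⁻ x, G x ∂μ)) := by
  set u : ℕ → ℝ := fun n => a + 1 / ((n : ℝ) + 1)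
  have hu_mem (n : ℕ) : a < u n := lt_add_of_pos_right a (by positivity)
  have hu_anti : Antitone u := fun m n hmn => by
    simp only [u]
    gcongr
  have hu : Tendsto u atTop (𝓝[>] a) :=
    tendsto_nhdsWithin_iff.2 ⟨by simpa [u] using
      (tendsto_one_div_add_atTop_nhds_zero_nat (𝕜 := ℝ)).const_add a, .of_forall hu_mem⟩
  have h_int_anti : AntitoneOn (fun t => ∫⁻ x, F t x ∂μ) (Ioi a) := fun s hs t ht hst =>
    lintegral_mono_ae (h_anti.mono fun x hx => hx hs ht hst)
  have h_sup := h_int_anti.tendsto_nhdsGT (OrderTop.bddAbove _)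
  have h_seq : Tendsto (fun n => ∫⁻ x, F (u n) x ∂μ) atTop (𝓝 (∫⁻ x, G x ∂μ)) :=
    lintegral_tendsto_of_tendsto_of_monotone (fun n => hF _ (hu_mem n))
      (h_anti.mono fun x hx m n hmn => hx (hu_mem n) (hu_mem m) (hu_anti hmn))
      (h_lim.mono fun x hx => hx.comp hu)
  rwa [tendsto_nhds_unique (h_sup.comp hu) h_seq] at h_sup

noncomputable def expNegRemainder (r : ℕ) (y : ℝ) : ℝ :=
  (-1) ^ r * (Real.exp (-y) - ∑ j ∈ Finset.range r, (-y) ^ j / j.factorial)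

lemma expNegRemainder_zero (y : ℝ) : expNegRemainder 0 y = Real.exp (-y) := by
  simp [expNegRemainder]

lemma expNegRemainder_succ (r : ℕ) (y : ℝ) :
    expNegRemainder (r + 1) y = y ^ r / r.factorial - expNegRemainder r y := by
  have hsign : (-1 : ℝ) ^ (r * 2) = 1 := Even.neg_one_pow ⟨r, by ring⟩
  simp only [expNegRemainder, Finset.sum_range_succ, pow_succ, neg_pow y]
  linear_combination (y ^ r / (r.factorial : ℝ)) * hsign

lemma expNegRemainder_apply_zero {r : ℕ} (hr : r ≠ 0) : expNegRemainder r 0 = 0 := by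
  obtain ⟨k, rfl⟩ := Nat.exists_eq_succ_of_ne_zero hr
  simp [expNegRemainder, Finset.sum_range_succ']

lemma expNegRemainder_mul_eq (r : ℕ) (t x : ℝ) :
    expNegRemainder r (t * x) = (-1) ^ r * (Real.exp (-t * x)
      - ∑ j ∈ Finset.range r, (-1) ^ j * t ^ j / j.factorial * x ^ j) := by
  simp only [expNegRemainder, neg_mul]
  congr 2
  refine Finset.sum_congr rfl fun j _ => ?_
  rw [neg_pow, mul_pow]
  ring

@[fun_prop]
lemma continuous_expNegRemainder (r : ℕ) : Continuous (expNegRemainder r) := by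
  unfold expNegRemainder
  fun_prop

lemma hasDerivAt_expNegRemainder_succ (r : ℕ) (y : ℝ) :
    HasDerivAt (expNegRemainder (r + 1)) (expNegRemainder r y) y := by
  induction r generalizing y with
  | zero =>
    have hfun : expNegRemainder 1 = fun z => 1 - Real.exp (-z) := by
      funext z; simp [expNegRemainder_succ, expNegRemainder_zero]
    rw [hfun, expNegRemainder_zero]
    simpa using ((Real.hasDerivAt_exp (-y)).comp y (hasDerivAt_neg y)).const_sub 1
  | succ k ih =>
    have hpow : HasDerivAt (fun z : ℝ => z ^ (k + 1) / (k + 1).factorial)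
        (y ^ k / k.factorial) y := by
      refine ((hasDerivAt_pow (k + 1) y).div_const _).congr_deriv ?_
      rw [Nat.factorial_succ, Nat.add_sub_cancel]
      push_cast
      field_simp
    have hfun : expNegRemainder (k + 2) =
        fun z => z ^ (k + 1) / (k + 1).factorial - expNegRemainder (k + 1) z :=
      funext (expNegRemainder_succ (k + 1))
    rw [hfun, expNegRemainder_succ k y]
    exact hpow.sub (ih y)

lemma expNegRemainder_nonneg (r : ℕ) {y : ℝ} (hy : 0 ≤ y) : 0 ≤ expNegRemainder r y := by
  induction r generalizing y with
  | zero => rw [expNegRemainder_zero]; positivity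
  | succ k ih =>
    exact nonneg_of_hasDerivAt_nonneg (hasDerivAt_expNegRemainder_succ k)
      (expNegRemainder_apply_zero k.succ_ne_zero).ge (fun _ => ih) hy

lemma mul_expNegRemainder_le (r : ℕ) {y : ℝ} (hy : 0 ≤ y) :
    y * expNegRemainder r y ≤ (r + 1) * expNegRemainder (r + 1) y := by
  induction r generalizing y with
  | zero =>
    have hderiv (z : ℝ) : HasDerivAt (fun z => expNegRemainder 1 z - z * expNegRemainder 0 z)
        (z * Real.exp (-z)) z := by
      have hexp : HasDerivAt (expNegRemainder 0) (-Real.exp (-z)) z := by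
        simp only [funext expNegRemainder_zero]
        exact ((Real.hasDerivAt_exp (-z)).comp z (hasDerivAt_neg z)).congr_deriv (by ring)
      refine ((hasDerivAt_expNegRemainder_succ 0 z).sub ((hasDerivAt_id z).mul hexp)).congr_deriv ?_
      simp only [expNegRemainder_zero, id]; ring
    have := nonneg_of_hasDerivAt_nonneg hderiv (by simp [expNegRemainder_apply_zero])
      (fun z hz => by positivity) hy
    simp only [CharP.cast_eq_zero, zero_add, one_mul]
    linarith
  | succ k ih =>
    have hderiv (z : ℝ) : HasDerivAt
        (fun z => (k + 2) * expNegRemainder (k + 2) z - z * expNegRemainder (k + 1) z)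
        ((k + 1) * expNegRemainder (k + 1) z - z * expNegRemainder k z) z := by
      refine (((hasDerivAt_expNegRemainder_succ (k + 1) z).const_mul _).sub
        ((hasDerivAt_id z).mul (hasDerivAt_expNegRemainder_succ k z))).congr_deriv ?_
      simp only [id]; ring
    have := nonneg_of_hasDerivAt_nonneg hderiv (by simp [expNegRemainder_apply_zero])
      (fun z hz => sub_nonneg.2 (ih hz)) hy
    push_cast
    linarith

lemma antitoneOn_expNegRemainder_mul_div_pow (r : ℕ) {x : ℝ} (hx : 0 ≤ x) :
    AntitoneOn (fun t => expNegRemainder r (t * x) / t ^ r) (Ioi 0) := by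
  cases r with
  | zero =>
    intro s _ t _ hst
    simpa [expNegRemainder_zero] using mul_le_mul_of_nonneg_right hst hx
  | succ k =>
    have hderiv (t : ℝ) (ht : t ≠ 0) :
        HasDerivAt (fun t => expNegRemainder (k + 1) (t * x) / t ^ (k + 1))
          ((expNegRemainder k (t * x) * x * t ^ (k + 1)
            - expNegRemainder (k + 1) (t * x) * ((k + 1 : ℕ) * t ^ k)) / (t ^ (k + 1)) ^ 2) t :=
      ((hasDerivAt_expNegRemainder_succ k (t * x)).comp t (hasDerivAt_mul_const x)).div
        (hasDerivAt_pow (k + 1) t) (pow_ne_zero _ ht)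
    refine antitoneOn_of_hasDerivWithinAt_nonpos (convex_Ioi 0)
      (fun t ht => (hderiv t (ne_of_gt ht)).continuousAt.continuousWithinAt)
      (fun t ht => (hderiv t (ne_of_gt (interior_subset ht : (0:ℝ) < t))).hasDerivWithinAt)
      (fun t ht => ?_)
    rw [interior_Ioi, mem_Ioi] at ht
    have hkey := mul_expNegRemainder_le k (mul_nonneg ht.le hx)
    apply div_nonpos_of_nonpos_of_nonneg _ (by positivity)
    calc _ = t ^ k * (t * x * expNegRemainder k (t * x)
          - (k + 1) * expNegRemainder (k + 1) (t * x)) := by push_cast; ring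
      _ ≤ 0 := mul_nonpos_of_nonneg_of_nonpos (by positivity) (by linarith)

noncomputable def momentKernel (r : ℕ) (t x : ℝ) : ℝ :=
  r.factorial / t ^ r * expNegRemainder r (t * x)

lemma continuous_momentKernel (r : ℕ) (t : ℝ) : Continuous (momentKernel r t) := by
  unfold momentKernel
  fun_prop

lemma momentKernel_nonneg (r : ℕ) {t x : ℝ} (ht : 0 ≤ t) (hx : 0 ≤ x) :
    0 ≤ momentKernel r t x := by
  have := expNegRemainder_nonneg r (mul_nonneg ht hx)
  unfold momentKernel
  positivity

lemma momentKernel_eq_pow_sub (r : ℕ) {t : ℝ} (ht : t ≠ 0) (x : ℝ) :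
    momentKernel r t x = x ^ r - t * momentKernel (r + 1) t x / (r + 1) := by
  simp only [momentKernel, expNegRemainder_succ, Nat.factorial_succ]
  push_cast
  field_simp
  ring

lemma momentKernel_le_pow (r : ℕ) {t x : ℝ} (ht : 0 < t) (hx : 0 ≤ x) :
    momentKernel r t x ≤ x ^ r := by
  rw [momentKernel_eq_pow_sub r ht.ne', sub_le_self_iff]
  have := momentKernel_nonneg (r + 1) ht.le hx
  positivity

lemma pow_sub_le_momentKernel (r : ℕ) {t x : ℝ} (ht : 0 < t) (hx : 0 ≤ x) :
    x ^ r - t * x ^ (r + 1) / (r + 1) ≤ momentKernel r t x := by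
  rw [momentKernel_eq_pow_sub r ht.ne']
  gcongr
  exact momentKernel_le_pow (r + 1) ht hx

lemma antitoneOn_momentKernel (r : ℕ) {x : ℝ} (hx : 0 ≤ x) :
    AntitoneOn (fun t => momentKernel r t x) (Ioi 0) := fun s hs t ht hst => by
  simp only [momentKernel, div_mul_eq_mul_div, mul_div_assoc]
  exact mul_le_mul_of_nonneg_left (antitoneOn_expNegRemainder_mul_div_pow r hx hs ht hst)
    (Nat.cast_nonneg _)

lemma tendsto_momentKernel (r : ℕ) {x : ℝ} (hx : 0 ≤ x) :
    Tendsto (fun t => momentKernel r t x) (𝓝[>] 0) (𝓝 (x ^ r)) := by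
  have hlower : Tendsto (fun t : ℝ => x ^ r - t * x ^ (r + 1) / (r + 1)) (𝓝[>] 0) (𝓝 (x ^ r)) :=
    (Continuous.tendsto' (by fun_prop) 0 _ (by simp)).mono_left nhdsWithin_le_nhds
  refine tendsto_of_tendsto_of_tendsto_of_le_of_le' hlower tendsto_const_nhds ?_ ?_
  · filter_upwards [self_mem_nhdsWithin] with t ht using pow_sub_le_momentKernel r ht hx
  · filter_upwards [self_mem_nhdsWithin] with t ht using momentKernel_le_pow r ht hx

section LaplaceTransform

variable {Ω : Type*} [MeasurableSpace Ω] {μ : Measure Ω} [IsFiniteMeasure μ]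
  {X : Ω → ℝ} {r : ℕ} {t : ℝ}

lemma integrable_pow_of_le (hX : Measurable X) (hX0 : ∀ ω, 0 ≤ X ω) {j n : ℕ}
    (hn : Integrable (fun ω => X ω ^ n) μ) (hjn : j ≤ n) :
    Integrable (fun ω => X ω ^ j) μ := by
  refine ((integrable_const 1).add hn).mono' (hX.pow_const j).aestronglyMeasurable
    (.of_forall fun ω => ?_)
  rw [Pi.add_apply, Real.norm_of_nonneg (pow_nonneg (hX0 ω) j)]
  rcases le_total (X ω) 1 with h | h
  · linarith [pow_le_one₀ (n := j) (hX0 ω) h, pow_nonneg (hX0 ω) n]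
  · linarith [pow_le_pow_right₀ h hjn]

lemma integrable_exp_neg_mul (hX : Measurable X) (hX0 : ∀ ω, 0 ≤ X ω) (ht : 0 ≤ t) :
    Integrable (fun ω => Real.exp (-t * X ω)) μ := by
  refine (integrable_const 1).mono' (by fun_prop) (.of_forall fun ω => ?_)
  rw [Real.norm_of_nonneg (Real.exp_nonneg _), Real.exp_le_one_iff]
  nlinarith [hX0 ω]

lemma integrable_momentKernel_comp (hX : Measurable X) (hX0 : ∀ ω, 0 ≤ X ω)
    (hint : ∀ j < r, Integrable (fun ω => X ω ^ j) μ) (ht : 0 ≤ t) :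
    Integrable (fun ω => momentKernel r t (X ω)) μ := by
  simp only [momentKernel, expNegRemainder_mul_eq]
  refine ((integrable_exp_neg_mul hX hX0 ht).sub (integrable_finsetSum _ fun j hj =>
    (hint j (Finset.mem_range.1 hj)).const_mul _)).const_mul _ |>.const_mul _

lemma integral_momentKernel_comp (hX : Measurable X) (hX0 : ∀ ω, 0 ≤ X ω)
    (hint : ∀ j < r, Integrable (fun ω => X ω ^ j) μ) (ht : 0 ≤ t) :
    ∫ ω, momentKernel r t (X ω) ∂μ = r.factorial / t ^ r * ((-1) ^ r *
      ((∫ ω, Real.exp (-t * X ω) ∂μ) - ∑ j ∈ Finset.range r,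
        (-1) ^ j * (∫ ω, X ω ^ j ∂μ) * t ^ j / j.factorial)) := by
  have hpow (j) (hj : j ∈ Finset.range r) := (hint j (Finset.mem_range.1 hj)).const_mul
    ((-1) ^ j * t ^ j / j.factorial)
  simp only [momentKernel, expNegRemainder_mul_eq]
  rw [integral_const_mul, integral_const_mul, integral_sub (integrable_exp_neg_mul hX hX0 ht)
    (integrable_finsetSum _ hpow), integral_finsetSum _ hpow]
  congr 3
  refine Finset.sum_congr rfl fun j _ => ?_
  rw [integral_const_mul]
  ring

end LaplaceTransform

theorem stmt15_general
    {Ω : Type*} [MeasurableSpace Ω] (μ : Measure Ω) [IsProbabilityMeasure μ]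
    (ξ : Ω → ℝ) (hmeas : Measurable ξ) (hnn : ∀ ω, 0 ≤ ξ ω)
    (r : ℕ)
    (hfin : (∫⁻ ω, ENNReal.ofReal (ξ ω ^ (r - 1)) ∂μ) < ⊤)
    (g : ℝ → ℝ)
    (hg : g = fun t => (-1) ^ r * t ^ (-(r : ℝ)) * (r.factorial : ℝ) *
      ((∫ ω, Real.exp (-t * ξ ω) ∂μ) -
        ∑ j ∈ Finset.range r,
          (-1) ^ j * (∫⁻ ω, ENNReal.ofReal (ξ ω ^ j) ∂μ).toReal * t ^ j /
            (j.factorial : ℝ))) :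
    (∀ t : ℝ, 0 < t → 0 ≤ g t) ∧
    AntitoneOn g (Set.Ioi 0) ∧
    Filter.Tendsto (fun t => ENNReal.ofReal (g t)) (nhdsWithin 0 (Set.Ioi 0))
      (nhds (∫⁻ ω, ENNReal.ofReal (ξ ω ^ r) ∂μ)) := by
  have hint : ∀ j < r, Integrable (fun ω => ξ ω ^ j) μ := by
    have hlast : Integrable (fun ω => ξ ω ^ (r - 1)) μ :=
      ⟨(hmeas.pow_const _).aestronglyMeasurable, by
        rwa [hasFiniteIntegral_iff_ofReal (.of_forall fun ω => pow_nonneg (hnn ω) _)]⟩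
    exact fun j hj => integrable_pow_of_le hmeas hnn hlast (by omega)
  have hg_eq (t : ℝ) (ht : 0 < t) : g t = ∫ ω, momentKernel r t (ξ ω) ∂μ := by
    have hmoment (j : ℕ) :
        (∫⁻ ω, ENNReal.ofReal (ξ ω ^ j) ∂μ).toReal = ∫ ω, ξ ω ^ j ∂μ :=
      (integral_eq_lintegral_of_nonneg_ae (.of_forall fun ω => pow_nonneg (hnn ω) j)
        (hmeas.pow_const j).aestronglyMeasurable).symm
    simp only [hg, hmoment, integral_momentKernel_comp hmeas hnn hint ht.le,
      Real.rpow_neg ht.le, Real.rpow_natCast]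
    ring
  have hint_kernel (t : ℝ) (ht : 0 < t) := integrable_momentKernel_comp hmeas hnn hint ht.le
  refine ⟨fun t ht => hg_eq t ht ▸ integral_nonneg fun ω => momentKernel_nonneg r ht.le (hnn ω),
    fun s hs t ht hst => ?_, ?_⟩
  · rw [hg_eq s hs, hg_eq t ht]
    exact integral_mono (hint_kernel t ht) (hint_kernel s hs)
      fun ω => antitoneOn_momentKernel r (hnn ω) hs ht hst
  · have h_lim : Tendsto (fun t => ∫⁻ ω, ENNReal.ofReal (momentKernel r t (ξ ω)) ∂μ)
        (𝓝[>] 0) (𝓝 (∫⁻ ω, ENNReal.ofReal (ξ ω ^ r) ∂μ)) :=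
      tendsto_lintegral_nhdsGT_of_antitoneOn
        (fun t _ => ((continuous_momentKernel r t).measurable.comp hmeas).ennreal_ofReal.aemeasurable)
        (.of_forall fun ω s hs t ht hst =>
          ENNReal.ofReal_le_ofReal (antitoneOn_momentKernel r (hnn ω) hs ht hst))
        (.of_forall fun ω => (ENNReal.continuous_ofReal.tendsto _).comp
          (tendsto_momentKernel r (hnn ω)))
    refine h_lim.congr' ?_
    filter_upwards [self_mem_nhdsWithin] with t ht
    rw [hg_eq t ht, ofReal_integral_eq_lintegral_ofReal (hint_kernel t ht)
      (.of_forall fun ω => momentKernel_nonneg r ht.le (hnn ω))]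

/-- Theorem C.1 of the paper. Let `ξ ≥ 0` be a random variable with Laplace
transform `f(t) = E e^{−tξ}` and moments `m_j = E ξ^j ∈ [0,∞]`, and let `r ≥ 1` with
`m_{r−1} < ∞`. Then `g(t) := (−1)^r t^{−r} r! [f(t) − ∑_{j<r} (−1)^j m_j t^j/j!]` is
nonnegative on `(0,∞)`, nonincreasing there, and tends to `m_r` in `[0,∞]` as `t ↓ 0`. -/
theorem stmt15
    {Ω : Type*} [MeasurableSpace Ω] (μ : Measure Ω) [IsProbabilityMeasure μ]
    (ξ : Ω → ℝ) (hmeas : Measurable ξ) (hnn : ∀ ω, 0 ≤ ξ ω)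
    (r : ℕ) (hr : 1 ≤ r)
    (hfin : (∫⁻ ω, ENNReal.ofReal (ξ ω ^ (r - 1)) ∂μ) < ⊤)
    (g : ℝ → ℝ)
    (hg : g = fun t => (-1) ^ r * t ^ (-(r : ℝ)) * (r.factorial : ℝ) *
      ((∫ ω, Real.exp (-t * ξ ω) ∂μ) -
        ∑ j ∈ Finset.range r,
          (-1) ^ j * (∫⁻ ω, ENNReal.ofReal (ξ ω ^ j) ∂μ).toReal * t ^ j /
            (j.factorial : ℝ))) :
    (∀ t : ℝ, 0 < t → 0 ≤ g t) ∧
    AntitoneOn g (Set.Ioi 0) ∧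
    Filter.Tendsto (fun t => ENNReal.ofReal (g t)) (nhdsWithin 0 (Set.Ioi 0))
      (nhds (∫⁻ ω, ENNReal.ofReal (ξ ω ^ r) ∂μ)) :=
  stmt15_general μ ξ hmeas hnn r hfin g hg
end

section
/- Let (p_k^{(1)}) and (p_k^{(2)}) be critical offspring distributions with pgfs Φ_1, Φ_2 satisfying Φ_1(t) ≤ Φ_2(t) for all t ∈ (0,1). Let r ≥ 2 be an integer and suppose that ∑_k k^j p_k^{(1)} = ∑_k k^j p_k^{(2)} < ∞ for j = 1, …, r−1. Then, with moments taken in [0,∞]: if r is even, ∑_k k^r p_k^{(1)} ≤ ∑_k k^r p_k^{(2)}; if r is odd, ∑_k k^r p_k^{(2)} ≤ ∑_k k^r p_k^{(1)}. In particular (case r = 2), Φ_1 ≤ Φ_2 on (0,1) implies σ_1² ≤ σ_2², where σ_i² = ∑_k k(k−1) p_k^{(i)}. -/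
/-! With `R_r(x) = (-1)^r (e^{-x} - ∑_{j<r} (-x)^j / j!)`, the signed Taylor remainder of
`e^{-x}`, one has `x^r e^{-x} / r! ≤ R_r(x) ≤ x^r / r!` for `x ≥ 0`, and termwise
`∑_k p_k R_r(k s) = (-1)^r (Φ(e^{-s}) - ∑_{j<r} (-s)^j m_j / j!)` with `m_j` the `j`-th moment.
As the moments of order `< r` agree, `Φ₁ ≤ Φ₂` compares the sums `∑_k p_k R_r(k s)` of the two
distributions, in the direction given by the parity of `r`. By the bounds on `R_r`, such a sum
lies between `s^r / r!` times `∑_k k^r p_k e^{-k s}` and `s^r / r!` times the `r`-th moment;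
dividing by `s^r / r!` and letting `s → 0⁺` compares the `r`-th moments. For `r = 2`,
criticality gives `∑_k k² p_k = σ² + 1`.
-/

open Finset Topology
open scoped Nat

noncomputable def expNegTaylorRem (r : ℕ) (x : ℝ) : ℝ :=
  (-1) ^ r * (Real.exp (-x) - ∑ j ∈ range r, (-x) ^ j / j !)

lemma hasDerivAt_pow_succ_div_factorial (r : ℕ) (x : ℝ) :
    HasDerivAt (fun y : ℝ => y ^ (r + 1) / (r + 1)!) (x ^ r / r !) x := by
  refine ((hasDerivAt_pow (r + 1) x).div_const ((r + 1)! : ℝ)).congr_deriv ?_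
  rw [Nat.factorial_succ, Nat.cast_mul]
  field_simp
  push_cast
  ring

lemma hasDerivAt_expNegTaylorRem_succ (r : ℕ) (x : ℝ) :
    HasDerivAt (expNegTaylorRem (r + 1)) (expNegTaylorRem r x) x := by
  have hterm (j : ℕ) :
      HasDerivAt (fun y : ℝ => (-y) ^ (j + 1) / (j + 1)!) (-((-x) ^ j / j !)) x := by
    have := (hasDerivAt_pow_succ_div_factorial j (-x)).comp x (hasDerivAt_neg x)
    simpa [Function.comp_def] using this
  have hsum : HasDerivAt (fun y : ℝ => ∑ j ∈ range (r + 1), (-y) ^ j / j !)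
      (-∑ j ∈ range r, (-x) ^ j / j !) x := by
    simp_rw [sum_range_succ' _ r, pow_zero, Nat.factorial_zero, Nat.cast_one, div_one,
      ← sum_neg_distrib]
    exact (HasDerivAt.fun_sum fun j _ => hterm j).add_const 1
  have hexp : HasDerivAt (fun y : ℝ => Real.exp (-y)) (-Real.exp (-x)) x := by
    simpa using (hasDerivAt_neg x).exp
  refine ((hexp.sub hsum).const_mul ((-1 : ℝ) ^ (r + 1))).congr_deriv ?_
  simp only [expNegTaylorRem, pow_succ]
  ring

lemma expNegTaylorRem_succ_zero (r : ℕ) : expNegTaylorRem (r + 1) 0 = 0 := by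
  simp [expNegTaylorRem, sum_range_succ', pow_succ]

lemma le_of_hasDerivAt_le_of_nonneg {f g f' g' : ℝ → ℝ} (hf : ∀ x, HasDerivAt f (f' x) x)
    (hg : ∀ x, HasDerivAt g (g' x) x) (h0 : f 0 ≤ g 0) (h' : ∀ x, 0 ≤ x → f' x ≤ g' x)
    {x : ℝ} (hx : 0 ≤ x) : f x ≤ g x := by
  have hmono : MonotoneOn (g - f) (Set.Ici 0) := by
    refine monotoneOn_of_hasDerivWithinAt_nonneg (convex_Ici 0)
      (fun y _ => ((hg y).sub (hf y)).continuousAt.continuousWithinAt)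
      (fun y _ => ((hg y).sub (hf y)).hasDerivWithinAt) fun y hy => ?_
    rw [interior_Ici] at hy
    exact sub_nonneg.mpr (h' y (le_of_lt hy))
  have := hmono Set.self_mem_Ici hx hx
  simp only [Pi.sub_apply] at this
  linarith

lemma expNegTaylorRem_le_pow_div_factorial (r : ℕ) {x : ℝ} (hx : 0 ≤ x) :
    expNegTaylorRem r x ≤ x ^ r / r ! := by
  induction r generalizing x with
  | zero => simpa [expNegTaylorRem] using Real.exp_le_one_iff.mpr (neg_nonpos.mpr hx)
  | succ r ih =>
    exact le_of_hasDerivAt_le_of_nonneg (hasDerivAt_expNegTaylorRem_succ r)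
      (hasDerivAt_pow_succ_div_factorial r) (by simp [expNegTaylorRem_succ_zero])
      (fun y hy => ih hy) hx

lemma pow_div_factorial_mul_exp_neg_le_expNegTaylorRem (r : ℕ) {x : ℝ} (hx : 0 ≤ x) :
    x ^ r / r ! * Real.exp (-x) ≤ expNegTaylorRem r x := by
  induction r generalizing x with
  | zero => simp [expNegTaylorRem]
  | succ r ih =>
    have hderiv (y : ℝ) : HasDerivAt (fun z => z ^ (r + 1) / (r + 1)! * Real.exp (-z))
        (y ^ r / r ! * Real.exp (-y) - y ^ (r + 1) / (r + 1)! * Real.exp (-y)) y :=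
      ((hasDerivAt_pow_succ_div_factorial r y).fun_mul (hasDerivAt_neg y).exp).congr_deriv
        (by ring)
    refine le_of_hasDerivAt_le_of_nonneg hderiv (hasDerivAt_expNegTaylorRem_succ r)
      (by simp [expNegTaylorRem_succ_zero]) (fun y hy => ?_) hx
    have : 0 ≤ y ^ (r + 1) / (r + 1)! * Real.exp (-y) := by positivity
    linarith [ih hy]

lemma expNegTaylorRem_nonneg (r : ℕ) {x : ℝ} (hx : 0 ≤ x) : 0 ≤ expNegTaylorRem r x :=
  (pow_div_factorial_mul_exp_neg_le_expNegTaylorRem r hx).trans' (by positivity)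

lemma summable_mul_pow_of_nonneg {p : ℕ → ℝ} (hp : ∀ k, 0 ≤ p k) (hs : Summable p) {t : ℝ}
    (ht₀ : 0 ≤ t) (ht₁ : t ≤ 1) : Summable fun k => p k * t ^ k :=
  hs.of_nonneg_of_le (fun k => by have := hp k; positivity)
    fun k => mul_le_of_le_one_right (hp k) (pow_le_one₀ ht₀ ht₁)

lemma tsum_ofReal_eq_ofReal_of_hasSum {α : Type*} {f : α → ℝ} {a : ℝ} (hf : ∀ i, 0 ≤ f i)
    (h : HasSum f a) : ∑' i, ENNReal.ofReal (f i) = ENNReal.ofReal a := by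
  rw [← ENNReal.ofReal_tsum_of_nonneg hf h.summable, h.tsum_eq]

lemma hasSum_toReal_tsum_ofReal {α : Type*} {f : α → ℝ} (hf : ∀ i, 0 ≤ f i)
    (h : ∑' i, ENNReal.ofReal (f i) ≠ ⊤) : HasSum f (∑' i, ENNReal.ofReal (f i)).toReal := by
  have hs : Summable f :=
    (ENNReal.summable_toReal h).congr fun i => ENNReal.toReal_ofReal (hf i)
  rw [← ENNReal.ofReal_tsum_of_nonneg hf hs, ENNReal.toReal_ofReal (tsum_nonneg hf)]
  exact hs.hasSum

lemma exists_hasSum_of_tsum_ofReal_eq {α : Type*} {f g : α → ℝ} (hf : ∀ i, 0 ≤ f i)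
    (hg : ∀ i, 0 ≤ g i) (heq : ∑' i, ENNReal.ofReal (f i) = ∑' i, ENNReal.ofReal (g i))
    (hne : ∑' i, ENNReal.ofReal (f i) ≠ ⊤) : ∃ m, HasSum f m ∧ HasSum g m :=
  ⟨_, hasSum_toReal_tsum_ofReal hf hne, heq ▸ hasSum_toReal_tsum_ofReal hg (heq ▸ hne)⟩

lemma hasSum_of_tsum_eq_of_ne_zero {α : Type*} {f : α → ℝ} {a : ℝ} (h : ∑' i, f i = a)
    (ha : a ≠ 0) : HasSum f a := by
  have hs : Summable f := by
    by_contra hns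
    exact ha (h ▸ tsum_eq_zero_of_not_summable hns)
  exact h ▸ hs.hasSum

lemma hasSum_mul_expNegTaylorRem {p m : ℕ → ℝ} {r : ℕ} {s Φ : ℝ}
    (hm : ∀ j < r, HasSum (fun k : ℕ => (k : ℝ) ^ j * p k) (m j))
    (hΦ : HasSum (fun k => p k * Real.exp (-s) ^ k) Φ) :
    HasSum (fun k : ℕ => p k * expNegTaylorRem r (k * s))
      ((-1) ^ r * (Φ - ∑ j ∈ range r, (-s) ^ j / j ! * m j)) := by
  have hpoly : HasSum (fun k : ℕ => ∑ j ∈ range r, (-s) ^ j / j ! * ((k : ℝ) ^ j * p k))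
      (∑ j ∈ range r, (-s) ^ j / j ! * m j) :=
    hasSum_sum fun j hj => (hm j (mem_range.mp hj)).mul_left _
  refine ((hΦ.sub hpoly).mul_left ((-1 : ℝ) ^ r)).congr_fun fun k => ?_
  simp only [expNegTaylorRem, ← Real.exp_nat_mul, mul_neg]
  rw [mul_left_comm, mul_sub, mul_sum]
  congr 2
  refine sum_congr rfl fun j _ => ?_
  rw [neg_mul_eq_mul_neg, mul_pow]
  ring

lemma tsum_ofReal_mul_expNegTaylorRem_le {q : ℕ → ℝ} (hq : ∀ k, 0 ≤ q k) (r : ℕ) {s : ℝ}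
    (hs : 0 ≤ s) :
    ∑' k : ℕ, ENNReal.ofReal (q k * expNegTaylorRem r (k * s)) ≤
      ENNReal.ofReal (s ^ r / r !) * ∑' k : ℕ, ENNReal.ofReal ((k : ℝ) ^ r * q k) := by
  rw [← ENNReal.tsum_mul_left]
  refine ENNReal.tsum_le_tsum fun k => ?_
  rw [← ENNReal.ofReal_mul (by positivity)]
  refine ENNReal.ofReal_le_ofReal ?_
  calc q k * expNegTaylorRem r (k * s) ≤ q k * ((k * s) ^ r / r !) :=
        mul_le_mul_of_nonneg_left (expNegTaylorRem_le_pow_div_factorial r (by positivity)) (hq k)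
    _ = s ^ r / r ! * ((k : ℝ) ^ r * q k) := by ring

lemma ofReal_mul_sum_le_tsum_ofReal_mul_expNegTaylorRem {q : ℕ → ℝ} (hq : ∀ k, 0 ≤ q k) (r : ℕ)
    {s : ℝ} (hs : 0 ≤ s) (F : Finset ℕ) :
    ENNReal.ofReal (s ^ r / r !) *
        ENNReal.ofReal (∑ k ∈ F, (k : ℝ) ^ r * q k * Real.exp (-(k * s))) ≤
      ∑' k : ℕ, ENNReal.ofReal (q k * expNegTaylorRem r (k * s)) := by
  have hterm (k : ℕ) : 0 ≤ (k : ℝ) ^ r * q k * Real.exp (-(k * s)) := by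
    have := hq k; positivity
  rw [← ENNReal.ofReal_mul (by positivity), mul_sum,
    ENNReal.ofReal_sum_of_nonneg fun k _ => mul_nonneg (by positivity) (hterm k)]
  refine (sum_le_sum fun k _ => ENNReal.ofReal_le_ofReal ?_).trans (ENNReal.sum_le_tsum F)
  calc s ^ r / r ! * ((k : ℝ) ^ r * q k * Real.exp (-(k * s)))
      = q k * ((k * s) ^ r / r ! * Real.exp (-(k * s))) := by ring
    _ ≤ q k * expNegTaylorRem r (k * s) := mul_le_mul_of_nonneg_left
        (pow_div_factorial_mul_exp_neg_le_expNegTaylorRem r (by positivity)) (hq k)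

lemma tsum_ofReal_pow_mul_le_of_forall_expNegTaylorRem_le {q₁ q₂ : ℕ → ℝ} (hq₁ : ∀ k, 0 ≤ q₁ k)
    (hq₂ : ∀ k, 0 ≤ q₂ k) (r : ℕ)
    (hT : ∀ s : ℝ, 0 < s → ∑' k : ℕ, ENNReal.ofReal (q₁ k * expNegTaylorRem r (k * s)) ≤
      ∑' k : ℕ, ENNReal.ofReal (q₂ k * expNegTaylorRem r (k * s))) :
    ∑' k : ℕ, ENNReal.ofReal ((k : ℝ) ^ r * q₁ k) ≤
      ∑' k : ℕ, ENNReal.ofReal ((k : ℝ) ^ r * q₂ k) := by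
  rw [ENNReal.tsum_eq_iSup_sum]
  refine iSup_le fun F => ?_
  set f : ℝ → ℝ := fun s => ∑ k ∈ F, (k : ℝ) ^ r * q₁ k * Real.exp (-(k * s))
  have hbound : ∀ s : ℝ, 0 < s → ENNReal.ofReal (f s) ≤
      ∑' k : ℕ, ENNReal.ofReal ((k : ℝ) ^ r * q₂ k) := by
    intro s hs
    have hc : 0 < ENNReal.ofReal (s ^ r / r !) := ENNReal.ofReal_pos.mpr (by positivity)
    refine (ENNReal.mul_le_mul_iff_right hc.ne' ENNReal.ofReal_ne_top).mp ?_
    exact (ofReal_mul_sum_le_tsum_ofReal_mul_expNegTaylorRem hq₁ r hs.le F).trans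
      ((hT s hs).trans (tsum_ofReal_mul_expNegTaylorRem_le hq₂ r hs.le))
  have hf : Continuous f := by fun_prop
  have hf0 : f 0 = ∑ k ∈ F, (k : ℝ) ^ r * q₁ k := by simp [f]
  rw [← ENNReal.ofReal_sum_of_nonneg fun k _ => mul_nonneg (by positivity) (hq₁ k), ← hf0]
  exact le_of_tendsto (x := 𝓝[>] (0 : ℝ))
    ((ENNReal.continuous_ofReal.comp hf).continuousAt.tendsto.mono_left nhdsWithin_le_nhds)
    (eventually_nhdsWithin_of_forall hbound)

lemma tsum_ofReal_pow_mul_le_of_neg_one_pow_mul_pgf_le {p₁ p₂ : ℕ → ℝ} {r : ℕ}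
    (hp₁ : ∀ k, 0 ≤ p₁ k) (hp₂ : ∀ k, 0 ≤ p₂ k) (hs₁ : Summable p₁) (hs₂ : Summable p₂)
    (hmom : ∀ j < r, ∃ m, HasSum (fun k : ℕ => (k : ℝ) ^ j * p₁ k) m ∧
      HasSum (fun k : ℕ => (k : ℝ) ^ j * p₂ k) m)
    (hΦ : ∀ t ∈ Set.Ioo (0 : ℝ) 1,
      (-1) ^ r * ∑' k, p₁ k * t ^ k ≤ (-1) ^ r * ∑' k, p₂ k * t ^ k) :
    ∑' k : ℕ, ENNReal.ofReal ((k : ℝ) ^ r * p₁ k) ≤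
      ∑' k : ℕ, ENNReal.ofReal ((k : ℝ) ^ r * p₂ k) := by
  choose! m hm using hmom
  refine tsum_ofReal_pow_mul_le_of_forall_expNegTaylorRem_le hp₁ hp₂ r fun s hs => ?_
  have ht : Real.exp (-s) ∈ Set.Ioo (0 : ℝ) 1 :=
    ⟨Real.exp_pos _, Real.exp_lt_one_iff.mpr (neg_neg_of_pos hs)⟩
  have hT {p : ℕ → ℝ} (hp : ∀ k, 0 ≤ p k) (hsum : Summable p)
      (hm : ∀ j < r, HasSum (fun k : ℕ => (k : ℝ) ^ j * p k) (m j)) :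
      ∑' k : ℕ, ENNReal.ofReal (p k * expNegTaylorRem r (k * s)) = ENNReal.ofReal ((-1) ^ r *
        (∑' k, p k * Real.exp (-s) ^ k - ∑ j ∈ range r, (-s) ^ j / j ! * m j)) :=
    tsum_ofReal_eq_ofReal_of_hasSum
      (fun k => mul_nonneg (hp k) (expNegTaylorRem_nonneg r (by positivity)))
      (hasSum_mul_expNegTaylorRem hm
        (summable_mul_pow_of_nonneg hp hsum (Real.exp_nonneg _) ht.2.le).hasSum)
  rw [hT hp₁ hs₁ fun j hj => (hm j hj).1, hT hp₂ hs₂ fun j hj => (hm j hj).2, mul_sub, mul_sub]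
  exact ENNReal.ofReal_le_ofReal (by linarith [hΦ _ ht])

lemma tsum_ofReal_sq_mul_eq_add {p : ℕ → ℝ} {μ : ℝ} (hp : ∀ k, 0 ≤ p k)
    (hμ : HasSum (fun k : ℕ => (k : ℝ) * p k) μ) :
    ∑' k : ℕ, ENNReal.ofReal ((k : ℝ) ^ 2 * p k) =
      ∑' k : ℕ, ENNReal.ofReal ((k : ℝ) * ((k : ℝ) - 1) * p k) + ENNReal.ofReal μ := by
  have hmean (k : ℕ) : 0 ≤ (k : ℝ) * p k := mul_nonneg k.cast_nonneg (hp k)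
  have hfact (k : ℕ) : 0 ≤ (k : ℝ) * ((k : ℝ) - 1) * p k := by
    refine mul_nonneg ?_ (hp k)
    rcases k with _ | k
    · simp
    · push_cast; simp only [add_sub_cancel_right]; positivity
  rw [← tsum_ofReal_eq_ofReal_of_hasSum hmean hμ, ← ENNReal.tsum_add]
  refine tsum_congr fun k => ?_
  rw [← ENNReal.ofReal_add (hfact k) (hmean k)]
  ring_nf

theorem stmt17_general
    (p₁ p₂ : ℕ → ℝ) (hp₁ : ∀ k, 0 ≤ p₁ k) (hp₂ : ∀ k, 0 ≤ p₂ k)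
    (hpsum₁ : ∑' k, p₁ k = 1) (hpsum₂ : ∑' k, p₂ k = 1)
    (hcrit₁ : ∑' k : ℕ, (k : ℝ) * p₁ k = 1) (hcrit₂ : ∑' k : ℕ, (k : ℝ) * p₂ k = 1)
    (hΦ : ∀ t ∈ Set.Ioo (0:ℝ) 1, (∑' k, p₁ k * t ^ k) ≤ ∑' k, p₂ k * t ^ k)
    (r : ℕ)
    (hmom : ∀ j : ℕ, 1 ≤ j → j ≤ r - 1 →
      (∑' k : ℕ, ENNReal.ofReal ((k : ℝ) ^ j * p₁ k)) =
        (∑' k : ℕ, ENNReal.ofReal ((k : ℝ) ^ j * p₂ k)) ∧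
      (∑' k : ℕ, ENNReal.ofReal ((k : ℝ) ^ j * p₁ k)) < ⊤) :
    ((Even r →
      (∑' k : ℕ, ENNReal.ofReal ((k : ℝ) ^ r * p₁ k)) ≤
        ∑' k : ℕ, ENNReal.ofReal ((k : ℝ) ^ r * p₂ k)) ∧
     (Odd r →
      (∑' k : ℕ, ENNReal.ofReal ((k : ℝ) ^ r * p₂ k)) ≤
        ∑' k : ℕ, ENNReal.ofReal ((k : ℝ) ^ r * p₁ k))) ∧
    (∑' k : ℕ, ENNReal.ofReal ((k : ℝ) * ((k : ℝ) - 1) * p₁ k)) ≤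
      ∑' k : ℕ, ENNReal.ofReal ((k : ℝ) * ((k : ℝ) - 1) * p₂ k) := by
  have hmass₁ := hasSum_of_tsum_eq_of_ne_zero hpsum₁ one_ne_zero
  have hmass₂ := hasSum_of_tsum_eq_of_ne_zero hpsum₂ one_ne_zero
  have hmean₁ := hasSum_of_tsum_eq_of_ne_zero hcrit₁ one_ne_zero
  have hmean₂ := hasSum_of_tsum_eq_of_ne_zero hcrit₂ one_ne_zero
  have hmom' : ∀ j < r, ∃ m, HasSum (fun k : ℕ => (k : ℝ) ^ j * p₁ k) m ∧
      HasSum (fun k : ℕ => (k : ℝ) ^ j * p₂ k) m := by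
    rintro (_ | j) hj
    · exact ⟨1, by simpa using hmass₁, by simpa using hmass₂⟩
    · obtain ⟨heq, hlt⟩ := hmom (j + 1) (by omega) (by omega)
      exact exists_hasSum_of_tsum_ofReal_eq (fun k => mul_nonneg (by positivity) (hp₁ k))
        (fun k => mul_nonneg (by positivity) (hp₂ k)) heq hlt.ne
  have hmom₂ : ∀ j < 2, ∃ m, HasSum (fun k : ℕ => (k : ℝ) ^ j * p₁ k) m ∧
      HasSum (fun k : ℕ => (k : ℝ) ^ j * p₂ k) m := by
    intro j hj
    interval_cases j
    exacts [⟨1, by simpa using hmass₁, by simpa using hmass₂⟩,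
      ⟨1, by simpa using hmean₁, by simpa using hmean₂⟩]
  refine ⟨⟨fun he => ?_, fun ho => ?_⟩, ?_⟩
  · exact tsum_ofReal_pow_mul_le_of_neg_one_pow_mul_pgf_le hp₁ hp₂ hmass₁.summable
      hmass₂.summable hmom' (by simpa [he.neg_one_pow] using hΦ)
  · exact tsum_ofReal_pow_mul_le_of_neg_one_pow_mul_pgf_le hp₂ hp₁ hmass₂.summable
      hmass₁.summable (fun j hj => (hmom' j hj).imp fun _ => And.symm)
      (by simpa [ho.neg_one_pow] using hΦ)
  · have hsecond := tsum_ofReal_pow_mul_le_of_neg_one_pow_mul_pgf_le hp₁ hp₂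
      hmass₁.summable hmass₂.summable hmom₂ (by simpa using hΦ)
    rw [tsum_ofReal_sq_mul_eq_add hp₁ hmean₁, tsum_ofReal_sq_mul_eq_add hp₂ hmean₂] at hsecond
    exact (ENNReal.add_le_add_iff_right ENNReal.ofReal_ne_top).mp hsecond

/-- Remark 6.6(a)-(b) / Appendix C of the paper. If two critical offspring
distributions satisfy `Φ₁ ≤ Φ₂` on `(0,1)` and have equal finite `j`-th moments for
`j = 1, …, r−1` (`r ≥ 2`), then (in `[0,∞]`) the `r`-th moments satisfy
`∑ k^r p₁ₖ ≤ ∑ k^r p₂ₖ` when `r` is even and the reverse inequality when `r` is odd.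
In particular (`r = 2`), `σ₁² ≤ σ₂²`. -/
theorem stmt17
    (p₁ p₂ : ℕ → ℝ) (hp₁ : ∀ k, 0 ≤ p₁ k) (hp₂ : ∀ k, 0 ≤ p₂ k)
    (hpsum₁ : ∑' k, p₁ k = 1) (hpsum₂ : ∑' k, p₂ k = 1)
    (hcrit₁ : ∑' k : ℕ, (k : ℝ) * p₁ k = 1) (hcrit₂ : ∑' k : ℕ, (k : ℝ) * p₂ k = 1)
    (hΦ : ∀ t ∈ Set.Ioo (0:ℝ) 1, (∑' k, p₁ k * t ^ k) ≤ ∑' k, p₂ k * t ^ k)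
    (r : ℕ) (hr : 2 ≤ r)
    (hmom : ∀ j : ℕ, 1 ≤ j → j ≤ r - 1 →
      (∑' k : ℕ, ENNReal.ofReal ((k : ℝ) ^ j * p₁ k)) =
        (∑' k : ℕ, ENNReal.ofReal ((k : ℝ) ^ j * p₂ k)) ∧
      (∑' k : ℕ, ENNReal.ofReal ((k : ℝ) ^ j * p₁ k)) < ⊤) :
    ((Even r →
      (∑' k : ℕ, ENNReal.ofReal ((k : ℝ) ^ r * p₁ k)) ≤
        ∑' k : ℕ, ENNReal.ofReal ((k : ℝ) ^ r * p₂ k)) ∧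
     (Odd r →
      (∑' k : ℕ, ENNReal.ofReal ((k : ℝ) ^ r * p₂ k)) ≤
        ∑' k : ℕ, ENNReal.ofReal ((k : ℝ) ^ r * p₁ k))) ∧
    (∑' k : ℕ, ENNReal.ofReal ((k : ℝ) * ((k : ℝ) - 1) * p₁ k)) ≤
      ∑' k : ℕ, ENNReal.ofReal ((k : ℝ) * ((k : ℝ) - 1) * p₂ k) :=
  stmt17_general p₁ p₂ hp₁ hp₂ hpsum₁ hpsum₂ hcrit₁ hcrit₂ hΦ r hmom
end

section
/- For every real t ≠ 0, Re( Γ(it − 1/2) / Γ(it) ) > 0, where Γ denotes the complex Gamma function and i is the imaginary unit. (Equivalently, for real t ≠ 0 the quotient Γ(1 − it)/Γ(3/2 − it) is not real, with argument strictly between −π/4 and 0 when t < 0; this is the positivity of the limiting variance (1/√π)·Re(Γ(it−1/2)/Γ(it))·σ^{-2} appearing in the central limit theorem for X_n(it).) -/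
/-!
Reflection `Γ(w) Γ(1 - w) = π / sin (π w)` at `w = z` and `w = z - 1/2`, together with
`Γ(1 - z) Γ(1/2) = Γ(3/2 - z) B(1 - z, 1/2)`, gives
`Γ(z - 1/2) / Γ(z) = -tan (π z) B(1 - z, 1/2) / Γ(1/2)`, whose real part at `z = it` is
`tanh (π t) Im B(1 - it, 1/2) / √π`.
Expanding `(1 - x)^(-1/2) = ∑ mₙ xⁿ`, where `mₙ = Ring.multichoose (1/2) n = binom(2n, n) / 4ⁿ > 0`,
and integrating termwise, `B(1 - it, 1/2) = ∑ mₙ / (n + 1 - it)`, whose imaginary part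
`t ∑ mₙ / |n + 1 - it|²` has the sign of `t`, as does `tanh (π t)`.
-/

open MeasureTheory Set

namespace Ring

theorem multichoose_eq_ascPochhammer_div {R : Type*} [Field R] [CharZero R] [BinomialRing R]
    (a : R) (n : ℕ) :
    multichoose a n = (ascPochhammer R n).eval a / n.factorial := by
  rw [eq_div_iff (Nat.cast_ne_zero.2 n.factorial_ne_zero), mul_comm, ← nsmul_eq_mul,
    factorial_nsmul_multichoose_eq_ascPochhammer, Polynomial.ascPochhammer_smeval_eq_eval]

theorem multichoose_pos {R : Type*} [Field R] [LinearOrder R] [IsStrictOrderedRing R]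
    [BinomialRing R] {a : R} (ha : 0 < a) (n : ℕ) : 0 < multichoose a n := by
  rw [multichoose_eq_ascPochhammer_div]
  exact div_pos (ascPochhammer_pos n a ha) (by positivity)

theorem succ_mul_multichoose_succ {R : Type*} [Field R] [CharZero R] [BinomialRing R]
    (a : R) (n : ℕ) :
    (n + 1) * multichoose a (n + 1) = (a + n) * multichoose a n := by
  rw [multichoose_eq_ascPochhammer_div, multichoose_eq_ascPochhammer_div, ascPochhammer_succ_eval,
    Nat.factorial_succ]
  push_cast
  field_simp

theorem hasSum_multichoose_mul_pow (a : ℝ) {x : ℝ} (hx : |x| < 1) :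
    HasSum (fun n ↦ multichoose a n * x ^ n) ((1 - x) ^ (-a)) := by
  have h := (Real.one_div_one_sub_rpow_hasFPowerSeriesOnBall_zero a).hasSum
    (y := x) (by simpa [enorm_eq_nnnorm, ← NNReal.coe_lt_coe] using hx)
  simp only [FormalMultilinearSeries.ofScalars_apply_eq, smul_eq_mul, zero_add] at h
  simpa [multichoose_eq, Real.rpow_neg (by linarith [le_abs_self x] : (0:ℝ) ≤ 1 - x)] using h

/-- The terms telescope: `mₙ / (n + 1) = (mₙ - mₙ₊₁) / (1 - a)`. -/
theorem summable_multichoose_div_succ {a : ℝ} (ha0 : 0 < a) (ha1 : a < 1) :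
    Summable (fun n : ℕ ↦ multichoose a n / (n + 1)) := by
  have htel (n : ℕ) : multichoose a n / (n + 1) =
      (multichoose a n - multichoose a (n + 1)) / (1 - a) := by
    have := succ_mul_multichoose_succ a n
    have h1a : 1 - a ≠ 0 := by linarith
    field_simp
    linear_combination this
  refine summable_of_sum_range_le (c := 1 / (1 - a))
    (fun n ↦ (div_pos (multichoose_pos ha0 n) (by positivity)).le) fun N ↦ ?_
  rw [Finset.sum_congr rfl fun n _ ↦ htel n, ← Finset.sum_div, Finset.sum_range_sub',
    multichoose_zero_right]
  gcongr
  linarith [multichoose_pos ha0 N]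

theorem summable_multichoose_div_add {a σ : ℝ} (ha0 : 0 < a) (ha1 : a < 1) (hσ : 0 < σ) :
    Summable (fun n : ℕ ↦ multichoose a n / (n + σ)) := by
  refine ((summable_multichoose_div_succ ha0 ha1).mul_left (1 + 1 / σ)).of_nonneg_of_le
    (fun n ↦ (div_pos (multichoose_pos ha0 n) (by positivity)).le) fun n ↦ ?_
  have := multichoose_pos ha0 n
  rw [mul_div_assoc', div_le_div_iff₀ (by positivity) (by positivity)]
  field_simp
  nlinarith

end Ring

theorem setIntegral_Ioo_cpow {r : ℂ} (hr : -1 < r.re) :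
    ∫ x in Ioo (0:ℝ) 1, (x:ℂ) ^ r = 1 / (r + 1) := by
  have hr1 : r + 1 ≠ 0 := fun h ↦ by
    have := congrArg Complex.re h
    simp only [Complex.add_re, Complex.one_re, Complex.zero_re] at this
    linarith
  rw [← integral_Ioc_eq_integral_Ioo, ← intervalIntegral.integral_of_le zero_le_one,
    integral_cpow (Or.inl hr), Complex.ofReal_zero, Complex.zero_cpow hr1]
  simp

theorem setIntegral_Ioo_rpow {r : ℝ} (hr : -1 < r) :
    ∫ x in Ioo (0:ℝ) 1, x ^ r = 1 / (r + 1) := by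
  rw [← integral_Ioc_eq_integral_Ioo, ← intervalIntegral.integral_of_le zero_le_one,
    integral_rpow (Or.inl hr), Real.zero_rpow (by linarith)]
  simp

namespace Complex

theorem hasSum_multichoose_mul_cpow (a : ℝ) (s : ℂ) {x : ℝ} (hx : x ∈ Ioo 0 1) :
    HasSum (fun n : ℕ ↦ (Ring.multichoose a n : ℝ) * (x:ℂ) ^ ((n:ℂ) + s - 1))
      ((x:ℂ) ^ (s - 1) * (1 - (x:ℂ)) ^ (-(a:ℂ))) := by
  have hx0 : (x:ℂ) ≠ 0 := ofReal_ne_zero.2 hx.1.ne'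
  have hsum := (hasSum_ofReal.2 (Ring.hasSum_multichoose_mul_pow a
    (abs_lt.2 ⟨by linarith [hx.1], hx.2⟩))).mul_left ((x:ℂ) ^ (s - 1))
  rw [ofReal_cpow (by linarith [hx.2])] at hsum
  push_cast at hsum
  refine hsum.congr_fun fun n ↦ ?_
  rw [add_sub_assoc, cpow_add _ _ hx0, cpow_natCast]
  ring

theorem hasSum_multichoose_div_betaIntegral {a : ℝ} (ha0 : 0 < a) (ha1 : a < 1) {s : ℂ}
    (hs : 0 < s.re) :
    HasSum (fun n : ℕ ↦ ((Ring.multichoose a n : ℝ) : ℂ) / (n + s))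
      (betaIntegral s (1 - a)) := by
  set F : ℕ → ℝ → ℂ := fun n x ↦ (Ring.multichoose a n : ℝ) * (x:ℂ) ^ ((n:ℂ) + s - 1)
  have hexp (n : ℕ) : -1 < ((n:ℂ) + s - 1).re := by
    simp only [sub_re, add_re, natCast_re, one_re]
    linarith [n.cast_nonneg (α := ℝ)]
  have hF_int (n : ℕ) : IntegrableOn (F n) (Ioo 0 1) :=
    ((intervalIntegral.integrableOn_Ioo_cpow_iff one_pos).2 (hexp n)).const_mul _
  have hF_integral (n : ℕ) : ∫ x in Ioo (0:ℝ) 1, F n x = Ring.multichoose a n / (n + s) := by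
    rw [integral_const_mul, setIntegral_Ioo_cpow (hexp n), sub_add_cancel, mul_one_div]
  have hF_norm (n : ℕ) : ∫ x in Ioo (0:ℝ) 1, ‖F n x‖ = Ring.multichoose a n / (n + s.re) := by
    have hexp' : -1 < (n:ℝ) + s.re - 1 := by linarith [hexp n]
    rw [setIntegral_congr_fun measurableSet_Ioo
      (g := fun x ↦ Ring.multichoose a n * x ^ ((n:ℝ) + s.re - 1)) fun x hx ↦ ?_,
      integral_const_mul, setIntegral_Ioo_rpow hexp', sub_add_cancel, mul_one_div]
    simp [F, norm_cpow_eq_rpow_re_of_pos hx.1, (Ring.multichoose_pos ha0 n).le]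
  have hF_sum : Summable fun n ↦ ∫ x in Ioo (0:ℝ) 1, ‖F n x‖ := by
    simpa only [hF_norm] using Ring.summable_multichoose_div_add ha0 ha1 hs
  have hβ : betaIntegral s (1 - a) = ∫ x in Ioo (0:ℝ) 1, ∑' n, F n x := by
    rw [betaIntegral, intervalIntegral.integral_of_le zero_le_one, integral_Ioc_eq_integral_Ioo]
    refine setIntegral_congr_fun measurableSet_Ioo fun x hx ↦ ?_
    rw [(hasSum_multichoose_mul_cpow a s hx).tsum_eq, sub_sub_cancel_left]
  rw [hβ]
  simpa only [hF_integral] using hasSum_integral_of_summable_integral_norm hF_int hF_sum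

open Real in
theorem Gamma_sub_half_div_Gamma {z : ℂ} (hz : z.re < 1) (hsin : sin (π * z) ≠ 0)
    (hcos : cos (π * z) ≠ 0) :
    Gamma (z - 1 / 2) / Gamma z = -tan (π * z) * betaIntegral (1 - z) (1 / 2) / Gamma (1 / 2) := by
  have h1z : Gamma (1 - z) ≠ 0 :=
    Gamma_ne_zero_of_re_pos (by simp only [sub_re, one_re, sub_pos]; linarith)
  have h32z : Gamma (1 - z + 1 / 2) ≠ 0 := Gamma_ne_zero_of_re_pos (by norm_num; linarith)
  have hhalf : Gamma (1 / 2) ≠ 0 := Gamma_ne_zero_of_re_pos (by norm_num)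
  have hreflect_half : Gamma (z - 1 / 2) * Gamma (1 - z + 1 / 2) = -(π / cos (π * z)) := by
    rw [show 1 - z + 1 / 2 = 1 - (z - 1 / 2) by ring, Gamma_mul_Gamma_one_sub,
      show (π : ℂ) * (z - 1 / 2) = π * z - π / 2 by ring, sin_sub_pi_div_two, div_neg]
  have hreflect : Gamma z * Gamma (1 - z) = π / sin (π * z) := Gamma_mul_Gamma_one_sub z
  have hbeta :
      Gamma (1 - z) * Gamma (1 / 2) = Gamma (1 - z + 1 / 2) * betaIntegral (1 - z) (1 / 2) :=
    Gamma_mul_Gamma_eq_betaIntegral (by simp only [sub_re, one_re, sub_pos]; linarith) (by norm_num)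
  rw [eq_div_of_mul_eq h32z hreflect_half, eq_div_of_mul_eq h1z hreflect,
    eq_div_of_mul_eq h32z ((mul_comm _ _).trans hbeta.symm), tan_eq_sin_div_cos]
  field_simp

theorem hasSum_im_betaIntegral {a : ℝ} (ha0 : 0 < a) (ha1 : a < 1) {s : ℂ} (hs : 0 < s.re) :
    HasSum (fun n : ℕ ↦ -s.im * (Ring.multichoose a n / normSq (n + s)))
      (betaIntegral s (1 - a)).im := by
  refine (hasSum_im (hasSum_multichoose_div_betaIntegral ha0 ha1 hs)).congr_fun fun n ↦ ?_
  simp only [div_im, ofReal_im, ofReal_re, zero_mul, zero_div, zero_sub, add_im, natCast_im,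
    zero_add]
  ring

theorem mul_im_betaIntegral_one_sub_mul_I_pos {a : ℝ} (ha0 : 0 < a) (ha1 : a < 1) {t : ℝ}
    (ht : t ≠ 0) : 0 < t * (betaIntegral (1 - t * I) (1 - a)).im := by
  have h := (hasSum_im_betaIntegral ha0 ha1 (s := 1 - t * I) (by simp)).mul_left t
  have hterm (n : ℕ) : 0 < Ring.multichoose a n / normSq (n + (1 - t * I)) :=
    div_pos (Ring.multichoose_pos ha0 n) (normSq_pos.2 (ne_of_apply_ne re
      (by simpa using n.cast_add_one_pos.ne')))
  simp only [sub_im, one_im, mul_im, ofReal_re, I_im, ofReal_im, I_re] at h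
  rw [← h.tsum_eq]
  refine h.summable.tsum_pos (fun n ↦ ?_) 0 ?_
  · nlinarith [hterm n, sq_nonneg t]
  · nlinarith [hterm 0, sq_pos_of_ne_zero ht]

open Real in
theorem re_Gamma_mul_I_sub_half_div_Gamma {t : ℝ} (ht : t ≠ 0) :
    (Gamma (t * I - 1 / 2) / Gamma (t * I)).re =
      Real.tanh (π * t) * (betaIntegral (1 - t * I) (1 - (1 / 2 : ℝ))).im /
        Real.Gamma (1 / 2) := by
  have hπt : (π : ℂ) * (t * I) = ((π * t : ℝ) : ℂ) * I := by push_cast; ring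
  have hsin : sin (π * (t * I)) ≠ 0 := by
    rw [hπt, sin_mul_I, ← ofReal_sinh]
    exact mul_ne_zero (ofReal_ne_zero.2 (Real.sinh_eq_zero.not.2 (mul_ne_zero pi_ne_zero ht)))
      I_ne_zero
  have hcos : cos (π * (t * I)) ≠ 0 := by
    rw [hπt, cos_mul_I, ← ofReal_cosh]
    exact ofReal_ne_zero.2 (cosh_pos _).ne'
  have hB : betaIntegral (1 - t * I) (1 / 2) = betaIntegral (1 - t * I) (1 - (1 / 2 : ℝ)) := by
    norm_num
  have hΓ : Gamma (1 / 2) = Real.Gamma (1 / 2) := by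
    rw [← Gamma_ofReal]; norm_num
  rw [Gamma_sub_half_div_Gamma (by simp) hsin hcos, hπt, tan_mul_I, ← ofReal_tanh, hB, hΓ]
  simp [-ofReal_tanh, div_ofReal_re]

end Complex

theorem Real.mul_tanh_pos {x : ℝ} (hx : x ≠ 0) : 0 < x * tanh x := by
  rw [tanh_eq_sinh_div_cosh, ← mul_div_assoc]
  refine div_pos ?_ (cosh_pos x)
  rcases hx.lt_or_gt with h | h
  · exact mul_pos_of_neg_of_neg h (sinh_neg_iff.2 h)
  · exact mul_pos h (sinh_pos_iff.2 h)

open Complex Real in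
/-- positivity of the limiting variance in Theorem 1.3; Appendix D of the
paper. For every real `t ≠ 0`, `Re(Γ(it − 1/2)/Γ(it)) > 0`. -/
theorem stmt19 (t : ℝ) (ht : t ≠ 0) :
    0 < (Complex.Gamma ((t : ℂ) * Complex.I - 1/2) / Complex.Gamma ((t : ℂ) * Complex.I)).re := by
  rw [re_Gamma_mul_I_sub_half_div_Gamma ht]
  have hB := mul_im_betaIntegral_one_sub_mul_I_pos (a := 1 / 2) (by norm_num) (by norm_num) ht
  have htanh : 0 < t * Real.tanh (π * t) := by
    have := Real.mul_tanh_pos (mul_ne_zero pi_ne_zero ht)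
    rw [mul_assoc] at this
    exact pos_of_mul_pos_right this pi_pos.le
  refine div_pos ?_ (Real.Gamma_pos_of_pos (by norm_num))
  nlinarith [mul_pos htanh hB, sq_nonneg t]
end
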